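/- arXiv:1509.01370 — 6 statements merged into one kernel-verified Lean document; each statement's English description precedes it below -/
import Mathlib

section
/- Let Ω be a bounded domain in ℂ and let F be holomorphic on Ω, continuous on the closure, with derivative f = F'. If |z|² = F(z) + conj(F(z)) for all z on the boundary ∂Ω, then conj(z) - f(z) is orthogonal in L²(Ω, area measure) to every function g holomorphic on a neighborhood of the closure of Ω; i.e., ∫_Ω (conj(z) - f(z)) · conj(g(z)) dA(z) = 0. -/
/-!
Write `φ = |z|² - F - conj F`, which vanishes on `∂Ω`, and `ψ = φ · conj g`. Since `F` and `g`
are holomorphic, the Wirtinger derivative `∂ψ/∂z = (1/2)(∂ψ/∂x - i ∂ψ/∂y)` equals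
`(conj z - f) · conj g`. The integral over `Ω` of a directional derivative of a function vanishing
on `∂Ω` is zero: after a rotation and by Fubini it reduces to horizontal lines, where the slice of
`Ω` is a countable union of open intervals with endpoints on `∂Ω`, each of which contributes zero
by the fundamental theorem of calculus.

If the integrand is not integrable, its Bochner integral is `0` by convention. If it is, then so is
`f · g`, because `|f g| ≤ |z g| + |(conj z - f) conj g|`; this makes the `∂/∂z̄`-part of the
derivative of `ψ` integrable as well.
-/

open MeasureTheory Complex Set ComplexConjugate

theorem IsOpen.exists_notMem_Ioc_subset {α : Type*} [ConditionallyCompleteLinearOrder α]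
    [TopologicalSpace α] [OrderTopology α] {U : Set α} (hU : IsOpen U) {x y : α} (hx : x ∈ U)
    (hyx : y ≤ x) (hy : y ∉ U) : ∃ a < x, a ∉ U ∧ Ioc a x ⊆ U := by
  have hmem : sSup (Uᶜ ∩ Iic x) ∈ Uᶜ ∩ Iic x :=
    hU.isClosed_compl.inter isClosed_Iic |>.csSup_mem ⟨y, hy, hyx⟩ ⟨x, fun _ hz => hz.2⟩
  refine ⟨_, hmem.2.lt_of_ne fun h => hmem.1 (by rwa [h]), hmem.1, fun z hz => ?_⟩
  by_contra hzU
  exact hz.1.not_ge (le_csSup ⟨x, fun _ hw => hw.2⟩ ⟨hzU, hz.2⟩)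

theorem IsOpen.exists_Ioo_subset_of_isBounded {U : Set ℝ} (hU : IsOpen U)
    (hb : Bornology.IsBounded U) {x : ℝ} (hx : x ∈ U) :
    ∃ a b, x ∈ Ioo a b ∧ Ioo a b ⊆ U ∧ a ∈ frontier U ∧ b ∈ frontier U := by
  obtain ⟨m, hm⟩ := hb.bddBelow
  obtain ⟨M, hM⟩ := hb.bddAbove
  obtain ⟨a, hax, haU, hIoc⟩ := hU.exists_notMem_Ioc_subset hx (by linarith [hm hx])
    fun h => (hm h).not_gt (sub_one_lt m)
  obtain ⟨b, hxb, hbU, hIco⟩ := hU.exists_notMem_Ioc_subset (α := ℝᵒᵈ) hx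
    (y := OrderDual.toDual (M + 1)) (show x ≤ M + 1 by linarith [hM hx])
    fun h => (hM h).not_gt (lt_add_one M)
  have hsub : Ioo a b ⊆ U := fun z hz =>
    (le_total z x).elim (fun h => hIoc ⟨hz.1, h⟩) (fun h => hIco ⟨hz.2, h⟩)
  have hab : a < b := hax.trans hxb
  have hcl : Icc a b ⊆ closure U := closure_Ioo hab.ne ▸ closure_mono hsub
  rw [hU.frontier_eq]
  exact ⟨a, b, ⟨hax, hxb⟩, hsub, ⟨hcl (left_mem_Icc.2 hab.le), haU⟩,
    ⟨hcl (right_mem_Icc.2 hab.le), hbU⟩⟩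

theorem HasDerivAt.comp_add_ofReal_mul {F : ℂ → ℂ} {f' z : ℂ} (hF : HasDerivAt F f' z) (v : ℂ) :
    HasDerivAt (fun t : ℝ => F (z + t * v)) (f' * v) 0 := by
  have hline : HasDerivAt (fun w : ℂ => z + w * v) v ((0 : ℝ) : ℂ) := by
    simpa using ((hasDerivAt_id _).mul_const v).const_add z
  have hF' : HasDerivAt F f' (z + ((0 : ℝ) : ℂ) * v) := by simpa using hF
  exact (hF'.comp (h := fun w : ℂ => z + w * v) _ hline).comp_ofReal

section VanishingOnFrontier

variable {E : Type*} [NormedAddCommGroup E] [NormedSpace ℝ E] [CompleteSpace E]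

theorem setIntegral_eq_zero_of_hasDerivAt_of_frontier {U : Set ℝ} (hU : IsOpen U)
    (hb : Bornology.IsBounded U) {ψ h : ℝ → E} (hψc : ContinuousOn ψ (closure U))
    (hψ0 : ∀ x ∈ frontier U, ψ x = 0) (hd : ∀ x ∈ U, HasDerivAt ψ (h x) x)
    (hint : IntegrableOn h U) : ∫ x in U, h x = 0 := by
  let ι := {p : ℝ × ℝ // Ioo p.1 p.2 ⊆ U ∧ p.1 ∈ frontier U ∧ p.2 ∈ frontier U ∧ p.1 < p.2}
  let I : ι → Set ℝ := fun p => Ioo p.1.1 p.1.2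
  have hfr : Disjoint (frontier U) U := by
    rw [hU.frontier_eq]; exact disjoint_sdiff_left
  have hunion : ⋃ p, I p = U := by
    refine (iUnion_subset fun p => p.2.1).antisymm fun x hx => ?_
    obtain ⟨a, b, hxab, hsub, ha, hb'⟩ := hU.exists_Ioo_subset_of_isBounded hb hx
    exact mem_iUnion.2 ⟨⟨(a, b), hsub, ha, hb', hxab.1.trans hxab.2⟩, hxab⟩
  have hle : ∀ p q : ι, ∀ w ∈ I p, w ∈ I q → q.1.1 ≤ p.1.1 ∧ p.1.2 ≤ q.1.2 := by
    intro p q w hwp hwq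
    constructor <;> by_contra! hlt
    · exact hfr.notMem_of_mem_left q.2.2.1 (p.2.1 ⟨hlt, hwq.1.trans hwp.2⟩)
    · exact hfr.notMem_of_mem_left q.2.2.2.1 (p.2.1 ⟨hwp.1.trans hwq.2, hlt⟩)
  have hdisj : Pairwise (Function.onFun Disjoint I) := by
    intro p q hpq
    refine Set.disjoint_left.2 fun w hwp hwq => hpq (Subtype.ext ?_)
    obtain ⟨h1, h2⟩ := hle p q w hwp hwq
    obtain ⟨h3, h4⟩ := hle q p w hwq hwp
    exact Prod.ext (h3.antisymm h1) (h2.antisymm h4)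
  have : Countable ι :=
    hdisj.countable_of_isOpen_disjoint (fun _ => isOpen_Ioo) fun p => nonempty_Ioo.2 p.2.2.2.2
  have hzero : ∀ p : ι, ∫ x in I p, h x = 0 := by
    rintro ⟨⟨a, b⟩, hsub, ha, hb', hab⟩
    have hcont : ContinuousOn ψ (Icc a b) := hψc.mono (closure_Ioo hab.ne ▸ closure_mono hsub)
    have hFTC := intervalIntegral.integral_eq_sub_of_hasDerivAt_of_le hab.le hcont
      (fun x hx => hd x (hsub hx))
      ((intervalIntegrable_iff_integrableOn_Ioo_of_le hab.le).2 (hint.mono_set hsub))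
    rwa [intervalIntegral.integral_of_le hab.le, integral_Ioc_eq_integral_Ioo, hψ0 _ ha,
      hψ0 _ hb', sub_zero] at hFTC
  rw [← hunion, integral_iUnion (fun _ => measurableSet_Ioo) hdisj (by rwa [hunion])]
  exact (tsum_congr hzero).trans tsum_zero

theorem setIntegral_prod_eq_zero_of_hasDerivAt_fst {S : Set (ℝ × ℝ)} (hS : IsOpen S)
    (hb : Bornology.IsBounded S) {ψ h : ℝ × ℝ → E} (hψc : ContinuousOn ψ (closure S))
    (hψ0 : ∀ p ∈ frontier S, ψ p = 0) (hd : ∀ p ∈ S, HasDerivAt (fun x => ψ (x, p.2)) (h p) p.1)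
    (hint : IntegrableOn h S) : ∫ p in S, h p = 0 := by
  have hint' : Integrable (S.indicator h) (volume.prod volume) :=
    (integrable_indicator_iff hS.measurableSet).2 hint
  rw [← integral_indicator hS.measurableSet, Measure.volume_eq_prod, integral_prod_symm _ hint']
  refine integral_eq_zero_of_ae ?_
  filter_upwards [hint'.prod_left_ae] with y hy
  have hcont : Continuous fun x : ℝ => (x, y) := by fun_prop
  have hslice : ∀ x, S.indicator h (x, y) = ((·, y) ⁻¹' S).indicator (fun x => h (x, y)) x :=
    fun x => (indicator_comp_right (·, y)).symm
  simp only [hslice] at hy ⊢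
  rw [integral_indicator (hS.preimage hcont).measurableSet]
  exact setIntegral_eq_zero_of_hasDerivAt_of_frontier (hS.preimage hcont)
    (hb.image_fst.subset fun x hx => ⟨_, hx, rfl⟩)
    (hψc.comp hcont.continuousOn (hcont.closure_preimage_subset S))
    (fun x hx => hψ0 _ (hcont.frontier_preimage_subset S hx)) (fun x hx => hd _ hx)
    ((integrable_indicator_iff (hS.preimage hcont).measurableSet).1 hy)

namespace Complex

theorem setIntegral_eq_zero_of_hasDerivAt_add_ofReal {Ω : Set ℂ} (hΩ : IsOpen Ω)
    (hb : Bornology.IsBounded Ω) {ψ h : ℂ → E} (hψc : ContinuousOn ψ (closure Ω))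
    (hψ0 : ∀ z ∈ frontier Ω, ψ z = 0) (hd : ∀ z ∈ Ω, HasDerivAt (fun t : ℝ => ψ (z + t)) (h z) 0)
    (hint : IntegrableOn h Ω) : ∫ z in Ω, h z = 0 := by
  let e : ℝ × ℝ ≃ₜ ℂ := equivRealProdCLM.toHomeomorph.symm
  have hmp : MeasurePreserving e := volume_preserving_equiv_real_prod.symm
  have hemb : MeasurableEmbedding e := measurableEquivRealProd.symm.measurableEmbedding
  rw [← hmp.setIntegral_preimage_emb hemb]
  refine setIntegral_prod_eq_zero_of_hasDerivAt_fst (hΩ.preimage e.continuous)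
    (by rw [← e.image_symm]; exact (equivRealProdCLM : ℂ →L[ℝ] ℝ × ℝ).lipschitz.isBounded_image hb)
    (by rw [← e.preimage_closure]; exact hψc.comp e.continuous.continuousOn fun _ hp => hp)
    (fun p hp => hψ0 _ (e.preimage_frontier Ω ▸ hp)) (fun p hp => ?_)
    ((hmp.integrableOn_comp_preimage hemb).2 hint)
  have hline : (fun x : ℝ => ψ (e (x, p.2))) = fun x => ψ (e p + ↑(x - p.1)) := by
    ext x; congr 1; apply Complex.ext <;> simp [e]
  rw [hline]
  exact HasDerivAt.comp_sub_const p.1 p.1 (sub_self p.1 ▸ hd _ hp)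

theorem setIntegral_eq_zero_of_hasDerivAt_add_ofReal_mul (a : Circle) {Ω : Set ℂ}
    (hΩ : IsOpen Ω) (hb : Bornology.IsBounded Ω) {ψ h : ℂ → E}
    (hψc : ContinuousOn ψ (closure Ω)) (hψ0 : ∀ z ∈ frontier Ω, ψ z = 0)
    (hd : ∀ z ∈ Ω, HasDerivAt (fun t : ℝ => ψ (z + t * a)) (h z) 0)
    (hint : IntegrableOn h Ω) : ∫ z in Ω, h z = 0 := by
  let e : ℂ ≃ₜ ℂ := (rotation a).toHomeomorph
  have hmp : MeasurePreserving e := (rotation a).measurePreserving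
  have hemb : MeasurableEmbedding e := e.measurableEmbedding
  rw [← hmp.setIntegral_preimage_emb hemb]
  refine setIntegral_eq_zero_of_hasDerivAt_add_ofReal (hΩ.preimage e.continuous)
    (by rw [← e.image_symm]; exact (rotation a).symm.lipschitz.isBounded_image hb)
    (by rw [← e.preimage_closure]; exact hψc.comp e.continuous.continuousOn fun _ hp => hp)
    (fun z hz => hψ0 _ (e.preimage_frontier Ω ▸ hz)) (fun z hz => ?_)
    ((hmp.integrableOn_comp_preimage hemb).2 hint)
  simpa [e, mul_add, mul_comm] using hd _ hz

theorem hasDerivAt_normSq_add_ofReal_mul (z v : ℂ) :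
    HasDerivAt (fun t : ℝ => (normSq (z + t * v) : ℂ)) (conj z * v + z * conj v) 0 := by
  have hline := (hasDerivAt_id z).comp_add_ofReal_mul v
  simp only [id, one_mul] at hline
  have hprod : (fun t : ℝ => (normSq (z + t * v) : ℂ)) =
      fun t : ℝ => (z + t * v) * star (z + t * v) :=
    funext fun t => (mul_conj _).symm
  rw [hprod]
  refine (hline.mul hline.star).congr_deriv ?_
  simp [mul_comm]

theorem setIntegral_wirtinger_eq_zero {Ω : Set ℂ} (hΩ : IsOpen Ω)
    (hb : Bornology.IsBounded Ω) {ψ A B : ℂ → ℂ} (hψc : ContinuousOn ψ (closure Ω))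
    (hψ0 : ∀ z ∈ frontier Ω, ψ z = 0)
    (hd : ∀ z ∈ Ω, ∀ v : ℂ,
      HasDerivAt (fun t : ℝ => ψ (z + t * v)) (A z * v + B z * conj v) 0)
    (hA : IntegrableOn A Ω) (hB : IntegrableOn B Ω) : ∫ z in Ω, A z = 0 := by
  let D : ℂ → ℂ → ℂ := fun v z => A z * v + B z * conj v
  have hDint : ∀ v, IntegrableOn (D v) Ω := fun v => (hA.mul_const v).add (hB.mul_const _)
  have hD : ∀ a : Circle, ∫ z in Ω, D a z = 0 := fun a =>
    setIntegral_eq_zero_of_hasDerivAt_add_ofReal_mul a hΩ hb hψc hψ0 (fun z hz => hd z hz a)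
      (hDint a)
  let i : Circle := ⟨I, by simp [Submonoid.unitSphere]⟩
  calc ∫ z in Ω, A z = ∫ z in Ω, (D 1 z - I * D I z) / 2 := by
        congr 1; ext z
        simp only [D, map_one, conj_I]
        linear_combination (A z - B z) / 2 * I_mul_I
    _ = ((∫ z in Ω, D (1 : Circle) z) - I * ∫ z in Ω, D i z) / 2 := by
        rw [integral_div, integral_sub (hDint 1) ((hDint I).const_mul I), integral_const_mul]
        rfl
    _ = 0 := by rw [hD, hD]; simp

end Complex

end VanishingOnFrontier

theorem integrableOn_conj_mul_conj {μ : Measure ℂ} {Ω : Set ℂ} {f g : ℂ → ℂ}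
    (hf : AEStronglyMeasurable f (μ.restrict Ω)) (hg : AEStronglyMeasurable g (μ.restrict Ω))
    (hzg : IntegrableOn (fun z => conj z * conj (g z)) Ω μ)
    (hT : IntegrableOn (fun z => (conj z - f z) * conj (g z)) Ω μ) :
    IntegrableOn (fun z => conj (f z) * conj (g z)) Ω μ := by
  refine (hzg.sub hT).norm.mono' (hf.star.mul hg.star) (ae_of_all _ fun z => ?_)
  simp only [Pi.sub_apply, ← sub_mul, sub_sub_cancel, norm_mul, RCLike.norm_conj, le_refl]

theorem best_approx_of_boundary_identity_general
    (Ω : Set ℂ) (hΩopen : IsOpen Ω)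
    (hΩbdd : Bornology.IsBounded Ω)
    (F f : ℂ → ℂ)
    (hFc : ContinuousOn F (closure Ω))
    (hf : ∀ z ∈ Ω, HasDerivAt F (f z) z)
    (hbdry : ∀ z ∈ frontier Ω, (Complex.normSq z : ℂ) = F z + (starRingEnd ℂ) (F z)) :
    ∀ g : ℂ → ℂ, (∃ U : Set ℂ, IsOpen U ∧ closure Ω ⊆ U ∧ DifferentiableOn ℂ g U) →
      ∫ z in Ω, ((starRingEnd ℂ) z - f z) * (starRingEnd ℂ) (g z) = 0 := by
  rintro g ⟨U, hU, hΩU, hg⟩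
  by_cases hT : IntegrableOn (fun z => (conj z - f z) * conj (g z)) Ω
  swap
  · exact integral_undef hT
  have hcont_int {u : ℂ → ℂ} (hu : ContinuousOn u (closure Ω)) : IntegrableOn u Ω :=
    (hu.integrableOn_compact hΩbdd.isCompact_closure).mono_set subset_closure
  have hgc : ContinuousOn g (closure Ω) := hg.continuousOn.mono hΩU
  have hg'c : ContinuousOn (deriv g) (closure Ω) := (hg.deriv hU).continuousOn.mono hΩU
  set φ : ℂ → ℂ := fun z => (normSq z : ℂ) - F z - conj (F z)
  have hφc : ContinuousOn φ (closure Ω) :=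
    ((continuous_ofReal.comp continuous_normSq).continuousOn.sub hFc).sub hFc.star
  have hf_meas : AEStronglyMeasurable f (volume.restrict Ω) :=
    (aestronglyMeasurable_deriv F _).congr <|
      (ae_restrict_iff' hΩopen.measurableSet).2 (ae_of_all _ fun z hz => (hf z hz).deriv)
  have hfg := integrableOn_conj_mul_conj hf_meas
    ((hgc.mono subset_closure).aestronglyMeasurable hΩopen.measurableSet)
    (hcont_int (continuous_conj.continuousOn.mul hgc.star)) hT
  refine setIntegral_wirtinger_eq_zero hΩopen hΩbdd (ψ := fun z => φ z * conj (g z))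
    (B := fun z => z * conj (g z) - conj (f z) * conj (g z) + φ z * conj (deriv g z))
    (hφc.mul hgc.star) (fun z hz => by simp [φ, hbdry z hz]) (fun z hz v => ?_) hT
    (((hcont_int (continuousOn_id.mul hgc.star)).sub hfg).add (hcont_int (hφc.mul hg'c.star)))
  have hFz := (hf z hz).comp_add_ofReal_mul v
  have hgz := (hg.differentiableAt (hU.mem_nhds (hΩU (subset_closure hz)))).hasDerivAt.comp_add_ofReal_mul v
  refine ((((hasDerivAt_normSq_add_ofReal_mul z v).sub hFz).sub hFz.star).mul hgz.star).congr_deriv ?_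
  simp [φ]
  ring

/-- If `F` is holomorphic on a bounded domain `Ω`, continuous on the closure, with
derivative `f`, and `|z|² = F(z) + conj (F z)` on `∂Ω`, then `conj z - f z` is orthogonal
in `L²(Ω, dA)` to every function holomorphic on a neighborhood of the closure of `Ω`. -/
theorem best_approx_of_boundary_identity
    (Ω : Set ℂ) (hΩopen : IsOpen Ω) (hΩconn : IsConnected Ω)
    (hΩbdd : Bornology.IsBounded Ω)
    (F f : ℂ → ℂ)
    (hF : DifferentiableOn ℂ F Ω)
    (hFc : ContinuousOn F (closure Ω))
    (hf : ∀ z ∈ Ω, HasDerivAt F (f z) z)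
    (hbdry : ∀ z ∈ frontier Ω, (Complex.normSq z : ℂ) = F z + (starRingEnd ℂ) (F z)) :
    ∀ g : ℂ → ℂ, (∃ U : Set ℂ, IsOpen U ∧ closure Ω ⊆ U ∧ DifferentiableOn ℂ g U) →
      ∫ z in Ω, ((starRingEnd ℂ) z - f z) * (starRingEnd ℂ) (g z) = 0 :=
  best_approx_of_boundary_identity_general Ω hΩopen hΩbdd F f hFc hf hbdry
end

section
/- Let Ω ⊂ ℂ be a bounded simply connected domain whose boundary Γ admits a Schwarz function S (holomorphic in a neighborhood of Γ with S(z) = conj(z) on Γ), and suppose S extends meromorphically to Ω with a pole of order k ≥ 1 at a point z₀ ∈ Ω, z₀ ≠ 0. If a polynomial p of degree n − 1 (with antiderivative P of degree n) is the best approximation to conj(z) in A²(Ω), so that z·S(z) = P(z) + P#(S(z)) on Γ (where P#(w) = conj(P(conj(w)))), then n ≤ 1; i.e., the best approximation is constant. -/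
/-!
On `∂Ω` the function `z S(z) - P(z) - P#(S(z))` vanishes. Near `z₀`, where `S = g / (z - z₀)^k`,
the term `P#(S)` has a pole of order exactly `nk` (the reversed polynomial of `P#` shows this),
whereas `z S - P` has a pole of order at most `k`. So if `n ≥ 2`, multiplying by `(z - z₀)^(nk)`
gives a function with a removable singularity at `z₀` and a nonzero value there. It is analytic on
the component of `Ω ∪ U` containing `closure Ω`, and it vanishes on `∂Ω`, which is uncountable
(a countable set does not disconnect the plane) and so has an accumulation point. The identity
principle then forces the value at `z₀` to be `0`.
-/

open MeasureTheory Complex Polynomial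

open Filter Topology Set

theorem Polynomial.pow_natDegree_mul_eval_div {K : Type*} [Field K] (Q : K[X]) {a b : K}
    (ha : a ≠ 0) (hb : b ≠ 0) :
    b ^ Q.natDegree * Q.eval (a / b) = a ^ Q.natDegree * Q.reverse.eval (b / a) := by
  let _ : Invertible (a / b) := invertibleOfNonzero (div_ne_zero ha hb)
  have h := eval₂_reverse_mul_pow (RingHom.id K) (a / b) Q
  rw [invOf_eq_inv, inv_div] at h
  rw [eval, ← h, eval, div_pow]
  field_simp

section Pole

variable {𝕜 : Type*} [NormedField 𝕜] {S g : 𝕜 → 𝕜} {z₀ : 𝕜} {k : ℕ}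

theorem Polynomial.tendsto_sub_pow_mul_eval_comp_of_pole (Q : 𝕜[X]) (hg : ContinuousAt g z₀)
    (hg₀ : g z₀ ≠ 0) (hk : k ≠ 0) (hS : ∀ᶠ z in 𝓝[≠] z₀, S z = g z / (z - z₀) ^ k) :
    Tendsto (fun z => (z - z₀) ^ (Q.natDegree * k) * Q.eval (S z)) (𝓝[≠] z₀)
      (𝓝 (g z₀ ^ Q.natDegree * Q.leadingCoeff)) := by
  have hcont : ContinuousAt
      (fun z => g z ^ Q.natDegree * Q.reverse.eval ((z - z₀) ^ k / g z)) z₀ :=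
    (hg.pow _).mul (Q.reverse.continuous.continuousAt.comp
      (((continuousAt_id.sub continuousAt_const).pow k).div hg hg₀))
  have hval : g z₀ ^ Q.natDegree * Q.reverse.eval ((z₀ - z₀) ^ k / g z₀)
      = g z₀ ^ Q.natDegree * Q.leadingCoeff := by
    rw [sub_self, zero_pow hk, zero_div, ← coeff_zero_eq_eval_zero, coeff_zero_reverse]
  refine (hval ▸ hcont.tendsto.mono_left nhdsWithin_le_nhds).congr' ?_
  filter_upwards [hS, self_mem_nhdsWithin, nhdsWithin_le_nhds (hg.eventually_ne hg₀)]
    with z hSz hz hgz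
  rw [hSz, mul_comm Q.natDegree, pow_mul, Q.pow_natDegree_mul_eval_div hgz
    (pow_ne_zero _ (sub_ne_zero.mpr hz))]

theorem tendsto_sub_pow_mul_sub_of_pole_of_lt {a b : 𝕜 → 𝕜} {m : ℕ} (ha : ContinuousAt a z₀)
    (hb : ContinuousAt b z₀) (hg : ContinuousAt g z₀) (hkm : k < m)
    (hS : ∀ᶠ z in 𝓝[≠] z₀, S z = g z / (z - z₀) ^ k) :
    Tendsto (fun z => (z - z₀) ^ m * (a z * S z - b z)) (𝓝[≠] z₀) (𝓝 0) := by
  have hcont : ContinuousAt (fun z => (z - z₀) ^ (m - k) * a z * g z - (z - z₀) ^ m * b z) z₀ :=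
    ((((continuousAt_id.sub continuousAt_const).pow _).mul ha).mul hg).sub
      (((continuousAt_id.sub continuousAt_const).pow _).mul hb)
  have hval : (z₀ - z₀) ^ (m - k) * a z₀ * g z₀ - (z₀ - z₀) ^ m * b z₀ = 0 := by
    simp [sub_self, zero_pow (Nat.sub_ne_zero_of_lt hkm), zero_pow (by omega : m ≠ 0)]
  refine (hval ▸ hcont.tendsto.mono_left nhdsWithin_le_nhds).congr' ?_
  filter_upwards [hS, self_mem_nhdsWithin] with z hSz hz
  have hz' : z - z₀ ≠ 0 := sub_ne_zero.mpr hz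
  rw [hSz, ← Nat.sub_add_cancel hkm.le, pow_add, Nat.add_sub_cancel]
  field_simp

theorem Polynomial.tendsto_sub_pow_mul_sub_eval_comp_of_pole (Q : 𝕜[X]) {b : 𝕜 → 𝕜}
    (hb : ContinuousAt b z₀) (hg : ContinuousAt g z₀) (hg₀ : g z₀ ≠ 0) (hk : k ≠ 0)
    (hQ : 2 ≤ Q.natDegree) (hS : ∀ᶠ z in 𝓝[≠] z₀, S z = g z / (z - z₀) ^ k) :
    Tendsto (fun z => (z - z₀) ^ (Q.natDegree * k) * (z * S z - b z - Q.eval (S z))) (𝓝[≠] z₀)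
      (𝓝 (-(g z₀ ^ Q.natDegree * Q.leadingCoeff))) := by
  have hkm : k < Q.natDegree * k := lt_mul_left (Nat.pos_of_ne_zero hk) hQ
  rw [← zero_sub]
  refine ((tendsto_sub_pow_mul_sub_of_pole_of_lt continuousAt_id hb hg hkm hS).sub
    (Q.tendsto_sub_pow_mul_eval_comp_of_pole hg hg₀ hk hS)).congr fun z => ?_
  simp only [id]
  ring

end Pole

theorem Bornology.IsBounded.not_countable_frontier {E : Type*} [NormedAddCommGroup E]
    [NormedSpace ℝ E] (hE : 1 < Module.rank ℝ E) {s : Set E} (hs : IsBounded s)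
    (hs' : (interior s).Nonempty) : ¬ (frontier s).Countable := by
  intro hc
  have hcover : (frontier s)ᶜ ⊆ interior s ∪ (closure s)ᶜ := fun z hz => by
    by_cases h : z ∈ closure s
    · exact .inl (not_not.mp fun h' => hz ⟨h, h'⟩)
    · exact .inr h
  have hdisj : Disjoint (interior s) (closure s)ᶜ :=
    disjoint_compl_right.mono_left interior_subset_closure
  obtain ⟨x, hx⟩ := hs'
  rcases (hc.isConnected_compl_of_one_lt_rank hE).isPreconnected.subset_or_subset
    isOpen_interior isClosed_closure.isOpen_compl hdisj hcover with h | h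
  · have : Nontrivial E := rank_pos_iff_nontrivial.mp (zero_lt_one.trans hE)
    obtain ⟨z, hz⟩ : (closure s)ᶜ.Nonempty := nonempty_compl.mpr fun h =>
      NormedSpace.unbounded_univ ℝ E (h ▸ hs.closure)
    exact hz (interior_subset_closure (h fun hz' => hz (frontier_subset_closure hz')))
  · exact h (fun hx' => hx'.2 hx) (interior_subset_closure hx)

theorem Bornology.IsBounded.exists_accPt_frontier {s : Set ℂ} (hs : IsBounded s)
    (hs' : (interior s).Nonempty) : ∃ w ∈ frontier s, AccPt w (𝓟 (frontier s)) :=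
  Set.Infinite.exists_accPt_of_subset_isCompact
    (fun hfin => hs.not_countable_frontier (by simp [rank_real_complex]) hs' hfin.countable)
    (hs.isCompact_closure.of_isClosed_subset isClosed_frontier frontier_subset_closure) le_rfl

section RemovableSingularity

variable {E : Type*} [NormedAddCommGroup E] [NormedSpace ℂ E] [CompleteSpace E] {f : ℂ → E}
  {C : Set ℂ} {z₀ : ℂ} {c : E}

theorem AnalyticOnNhd.update_of_tendsto (hf : AnalyticOnNhd ℂ f (C \ {z₀})) (hC : IsOpen C)
    (hlim : Tendsto f (𝓝[≠] z₀) (𝓝 c)) : AnalyticOnNhd ℂ (Function.update f z₀ c) C := by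
  have hupdate : ∀ x ≠ z₀, Function.update f z₀ c =ᶠ[𝓝 x] f := fun x hx => by
    filter_upwards [eventually_ne_nhds hx] with y hy using Function.update_of_ne hy ..
  intro x hx
  rcases eq_or_ne x z₀ with rfl | hne
  · refine Complex.analyticAt_of_differentiable_on_punctured_nhds_of_continuousAt ?_
      (continuousAt_update_same.mpr hlim)
    filter_upwards [sdiff_mem_nhdsWithin_compl (hC.mem_nhds hx) {x}] with z hz
    exact (hf z hz).differentiableAt.congr_of_eventuallyEq (hupdate z hz.2)
  · exact (hf x ⟨hx, hne⟩).congr (hupdate x hne).symm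

theorem AnalyticOnNhd.eq_zero_of_tendsto_of_accPt (hf : AnalyticOnNhd ℂ f (C \ {z₀}))
    (hC : IsOpen C) (hCpre : IsPreconnected C) (hz₀ : z₀ ∈ C) (hlim : Tendsto f (𝓝[≠] z₀) (𝓝 c))
    {Z : Set ℂ} (hfZ : EqOn f 0 Z) (hz₀Z : z₀ ∉ Z) {w : ℂ} (hwC : w ∈ C) (hw : AccPt w (𝓟 Z)) :
    c = 0 := by
  have hzero : EqOn (Function.update f z₀ c) 0 C := by
    refine (hf.update_of_tendsto hC hlim).eqOn_zero_of_preconnected_of_frequently_eq_zero hCpre hwC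
      ((accPt_iff_frequently_nhdsNE.mp hw).mono fun z hz => ?_)
    rw [Function.update_of_ne (ne_of_mem_of_not_mem hz hz₀Z), hfZ hz, Pi.zero_apply]
  simpa using hzero hz₀

end RemovableSingularity

theorem schwarz_pole_forces_constant_best_approx_general
    (Ω : Set ℂ) (hΩopen : IsOpen Ω) (hΩconn : IsConnected Ω)
    (hΩbdd : Bornology.IsBounded Ω)
    (S : ℂ → ℂ) (U : Set ℂ) (hUopen : IsOpen U) (hU : frontier Ω ⊆ U)
    (hSU : DifferentiableOn ℂ S U)
    (z₀ : ℂ) (hz₀ : z₀ ∈ Ω) (k : ℕ) (hk : 1 ≤ k)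
    (hSmero : DifferentiableOn ℂ S (Ω \ {z₀}))
    (hpole : ∃ g : ℂ → ℂ, AnalyticAt ℂ g z₀ ∧ g z₀ ≠ 0 ∧
      ∀ᶠ z in nhdsWithin z₀ {z₀}ᶜ, S z = g z / (z - z₀) ^ k)
    (P : Polynomial ℂ) (n : ℕ) (hnP : P.natDegree = n)
    (hident : ∀ z ∈ frontier Ω,
      z * S z = P.eval z + (P.map (starRingEnd ℂ)).eval (S z)) :
    n ≤ 1 := by
  by_contra! hn
  obtain ⟨g, hg, hg₀, hS⟩ := hpole
  set Q := P.map (starRingEnd ℂ)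
  have hQ : Q.natDegree = n := (natDegree_map _).trans hnP
  set T : ℂ → ℂ := fun z => (z - z₀) ^ (n * k) * (z * S z - P.eval z - Q.eval (S z))
  have hT_lim : Tendsto T (𝓝[≠] z₀) (𝓝 (-(g z₀ ^ n * Q.leadingCoeff))) := by
    simpa only [hQ] using Q.tendsto_sub_pow_mul_sub_eval_comp_of_pole P.continuous.continuousAt
      hg.continuousAt hg₀ (by omega) (by omega) hS
  set C := connectedComponentIn (Ω ∪ U) z₀
  have hΩC : closure Ω ⊆ C := hΩconn.isPreconnected.closure.subset_connectedComponentIn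
    (subset_closure hz₀) (closure_eq_self_union_frontier Ω ▸ union_subset_union_right Ω hU)
  have hS_an : AnalyticOnNhd ℂ S (C \ {z₀}) := fun x ⟨hxC, hx⟩ => by
    rcases connectedComponentIn_subset _ _ hxC with hxΩ | hxU
    · exact hSmero.analyticAt ((hΩopen.sdiff isClosed_singleton).mem_nhds ⟨hxΩ, hx⟩)
    · exact hSU.analyticAt (hUopen.mem_nhds hxU)
  have hT_an : AnalyticOnNhd ℂ T (C \ {z₀}) := fun x hx =>
    ((analyticAt_id.sub analyticAt_const).pow _).mul (((analyticAt_id.mul (hS_an x hx)).sub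
      (P.differentiable.analyticAt x)).sub ((hS_an x hx).aeval_polynomial Q))
  have hT_zero : EqOn T 0 (frontier Ω) := fun z hz => by simp [T, hident z hz, Q]
  have hz₀_fr : z₀ ∉ frontier Ω := fun h => h.2 (hΩopen.interior_eq.symm ▸ hz₀)
  obtain ⟨w, hw, hacc⟩ := hΩbdd.exists_accPt_frontier (hΩopen.interior_eq.symm ▸ ⟨z₀, hz₀⟩)
  have hlim_zero := hT_an.eq_zero_of_tendsto_of_accPt (hΩopen.union hUopen).connectedComponentIn
    isPreconnected_connectedComponentIn (hΩC (subset_closure hz₀)) hT_lim hT_zero hz₀_fr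
    (hΩC (frontier_subset_closure hw)) hacc
  have hlc : Q.leadingCoeff ≠ 0 := leadingCoeff_ne_zero.mpr fun h => by simp [h] at hQ; omega
  exact mul_ne_zero (pow_ne_zero n hg₀) hlc (neg_eq_zero.mp hlim_zero)

/-- If the boundary of a bounded simply connected domain `Ω` admits a Schwarz function `S`
which extends meromorphically to `Ω` with a pole of order `k ≥ 1` at `z₀ ∈ Ω`, `z₀ ≠ 0`, and a
polynomial `p` (with antiderivative `P` of degree `n`) is the best approximation to `conj z`
in `A²(Ω)`, so that `z * S z = P z + P#(S z)` on `∂Ω`, then `n ≤ 1`. -/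
theorem schwarz_pole_forces_constant_best_approx
    (Ω : Set ℂ) (hΩopen : IsOpen Ω) (hΩconn : IsConnected Ω)
    (hΩbdd : Bornology.IsBounded Ω) (hΩsc : SimplyConnectedSpace Ω)
    (S : ℂ → ℂ) (U : Set ℂ) (hUopen : IsOpen U) (hU : frontier Ω ⊆ U)
    (hSU : DifferentiableOn ℂ S U)
    (hSchwarz : ∀ z ∈ frontier Ω, S z = (starRingEnd ℂ) z)
    (z₀ : ℂ) (hz₀ : z₀ ∈ Ω) (hz₀ne : z₀ ≠ 0) (k : ℕ) (hk : 1 ≤ k)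
    (hSmero : DifferentiableOn ℂ S (Ω \ {z₀}))
    (hpole : ∃ g : ℂ → ℂ, AnalyticAt ℂ g z₀ ∧ g z₀ ≠ 0 ∧
      ∀ᶠ z in nhdsWithin z₀ {z₀}ᶜ, S z = g z / (z - z₀) ^ k)
    (p P : Polynomial ℂ) (n : ℕ) (hnP : P.natDegree = n) (hder : P.derivative = p)
    (hdeg : p.natDegree = n - 1)
    (hpB : MemLp (fun z => p.eval z) 2 (volume.restrict Ω))
    (hbest : ∀ g : ℂ → ℂ, DifferentiableOn ℂ g Ω → MemLp g 2 (volume.restrict Ω) →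
      ∫ z in Ω, ‖(starRingEnd ℂ) z - p.eval z‖ ^ 2 ≤ ∫ z in Ω, ‖(starRingEnd ℂ) z - g z‖ ^ 2)
    (hident : ∀ z ∈ frontier Ω,
      z * S z = P.eval z + (P.map (starRingEnd ℂ)).eval (S z)) :
    n ≤ 1 :=
  schwarz_pole_forces_constant_best_approx_general Ω hΩopen hΩconn hΩbdd S U hUopen hU hSU z₀ hz₀ k
    hk hSmero hpole P n hnP hident
end

section
/- Let Ω ⊂ ℂ be a bounded simply connected domain with piecewise smooth boundary and let u ∈ W₀^{1,2}(Ω) be real-valued with u ≢ 0. Then λ_{A²}(Ω) ≥ 2 |∫_Ω u dA| / ‖∇u‖_{L²(Ω)}, where λ_{A²}(Ω) = inf_{f ∈ A²(Ω)} ‖conj(z) − f‖_{L²(Ω)}. -/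
open MeasureTheory Complex Set

lemma divergence_aux (w : ℂ → ℂ)
    (hd : Differentiable ℝ w) (hw : HasCompactSupport w)
    (hc : Continuous fun z => I • fderiv ℝ w z 1 - fderiv ℝ w z I) :
    ∫ z, (I • fderiv ℝ w z 1 - fderiv ℝ w z I) = 0 := by
  set g : ℂ → ℂ := fun z => I • fderiv ℝ w z 1 - fderiv ℝ w z I with hg
  have hgs : HasCompactSupport g := by
    apply HasCompactSupport.intro (hw.isCompact)
    intro z hz
    have : fderiv ℝ w z = 0 := by
      have := support_fderiv_subset ℝ (f := w)
      by_contra h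
      exact hz (this h)
    simp [hg, this]
  obtain ⟨r, hr0, hr⟩ : ∃ r : ℝ, 0 ≤ r ∧ tsupport w ∪ tsupport g ⊆ Metric.closedBall 0 r := by
    obtain ⟨r, hr⟩ := (hw.union hgs).isBounded.subset_closedBall 0
    exact ⟨max r 0, le_max_right _ _, hr.trans (Metric.closedBall_subset_closedBall (le_max_left _ _))⟩
  set R : ℝ := r + 1 with hR
  have hrR : r < R := by simp [hR]
  have hwz : ∀ z : ℂ, r < |z.re| ∨ r < |z.im| → w z = 0 := by
    intro z hz
    apply image_eq_zero_of_notMem_tsupport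
    intro h
    have := hr (Or.inl h)
    simp only [Metric.mem_closedBall, dist_zero_right] at this
    rcases hz with h' | h'
    · exact absurd (le_trans (Complex.abs_re_le_norm z) this) (not_le.2 h')
    · exact absurd (le_trans (Complex.abs_im_le_norm z) this) (not_le.2 h')
  have hgz : ∀ z : ℂ, r < |z.re| ∨ r < |z.im| → g z = 0 := by
    intro z hz
    apply image_eq_zero_of_notMem_tsupport
    intro h
    have := hr (Or.inr h)
    simp only [Metric.mem_closedBall, dist_zero_right] at this
    rcases hz with h' | h'
    · exact absurd (le_trans (Complex.abs_re_le_norm z) this) (not_le.2 h')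
    · exact absurd (le_trans (Complex.abs_im_le_norm z) this) (not_le.2 h')
  set z₀ : ℂ := ⟨-R, -R⟩ with hz₀
  set w₀ : ℂ := ⟨R, R⟩ with hw₀
  have key := Complex.integral_boundary_rect_of_hasFDerivAt_real_off_countable w
    (fun z => fderiv ℝ w z) z₀ w₀ ∅ Set.countable_empty
    (hd.continuous.continuousOn)
    (fun x _ => (hd x).hasFDerivAt)
    ((hc.integrable_of_hasCompactSupport hgs).integrableOn)
  have hz₀re : z₀.re = -R := rfl
  have hz₀im : z₀.im = -R := rfl
  have hw₀re : w₀.re = R := rfl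
  have hw₀im : w₀.im = R := rfl
  rw [hz₀re, hz₀im, hw₀re, hw₀im] at key
  -- boundary terms vanish
  have hb1 : ∀ (c : ℝ), |c| = R → (∫ x : ℝ in (-R)..R, w (x + c * I)) = 0 := by
    intro c hcabs
    have : ∀ x : ℝ, w (x + c * I) = 0 := by
      intro x
      apply hwz
      right
      simp [hcabs, hrR]
    simp [this]
  have hb2 : ∀ (c : ℝ), |c| = R → (∫ y : ℝ in (-R)..R, w (c + y * I)) = 0 := by
    intro c hcabs
    have : ∀ y : ℝ, w (c + y * I) = 0 := by
      intro y
      apply hwz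
      left
      simp [hcabs, hrR]
    simp [this]
  have hRabs : |R| = R := abs_of_pos (lt_of_le_of_lt hr0 hrR)
  have hnRabs : |(-R : ℝ)| = R := by rw [abs_neg]; exact hRabs
  rw [hb1 _ hnRabs, hb1 _ hRabs, hb2 _ hRabs, hb2 _ hnRabs] at key
  simp only [sub_zero, zero_sub, smul_zero, add_zero, neg_zero, zero_add] at key
  -- so iterated integral is zero
  have key2 : (∫ x : ℝ in (-R)..R, ∫ y : ℝ in (-R)..R, g (x + y * I)) = 0 := by
    rw [hg]; exact key.symm
  -- identify with the full integral
  have hgcont : Continuous g := hc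
  have hGint : Integrable (fun p : ℝ × ℝ => g (p.1 + p.2 * I)) := by
    have : (fun p : ℝ × ℝ => g (p.1 + p.2 * I)) = g ∘ (Complex.equivRealProdCLM.symm : ℝ × ℝ → ℂ) := by
      ext p
      simp [Complex.equivRealProdCLM_symm_apply]
    rw [this]
    apply Continuous.integrable_of_hasCompactSupport
    · exact hgcont.comp Complex.equivRealProdCLM.symm.continuous
    · exact hgs.comp_homeomorph Complex.equivRealProdCLM.symm.toHomeomorph
  have hfull : (∫ z, g z) = ∫ p : ℝ × ℝ, g (p.1 + p.2 * I) := by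
    rw [← (Complex.volume_preserving_equiv_real_prod.symm).integral_comp
      Complex.measurableEquivRealProd.symm.measurableEmbedding g]
    congr 1
    ext p
    rw [Complex.measurableEquivRealProd_symm_apply, Complex.mk_eq_add_mul_I]
  rw [hfull]
  rw [MeasureTheory.Measure.volume_eq_prod] at hGint
  rw [MeasureTheory.Measure.volume_eq_prod, MeasureTheory.integral_prod _ hGint]
  -- truncate to the rectangle
  have habs : ∀ z : ℂ, g z ≠ 0 → |z.re| ≤ r ∧ |z.im| ≤ r := by
    intro z hz
    have hm := hr (Or.inr (subset_tsupport (f := g) hz))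
    simp only [Metric.mem_closedBall, dist_zero_right] at hm
    exact ⟨(Complex.abs_re_le_norm z).trans hm, (Complex.abs_im_le_norm z).trans hm⟩
  have hinner : ∀ x : ℝ, (∫ y : ℝ, g (x + y * I)) = ∫ y : ℝ in (-R)..R, g (x + y * I) := by
    intro x
    rw [intervalIntegral.integral_eq_integral_of_support_subset]
    intro y hy
    have h2 := (habs _ hy).2
    simp only [Complex.add_im, Complex.ofReal_im, Complex.mul_im, Complex.ofReal_re, Complex.I_im,
      Complex.I_re, mul_zero, mul_one, zero_add, zero_mul, add_zero] at h2
    rw [abs_le] at h2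
    constructor <;> [linarith; linarith]
  have houter : (∫ x : ℝ, ∫ y : ℝ, g (x + y * I)) = ∫ x : ℝ in (-R)..R, ∫ y : ℝ, g (x + y * I) := by
    rw [intervalIntegral.integral_eq_integral_of_support_subset]
    intro x hx
    simp only [Function.mem_support] at hx
    by_contra hmem
    apply hx
    have hz : ∀ y : ℝ, g (x + y * I) = 0 := by
      intro y
      by_contra hgy
      have h1 := (habs _ hgy).1
      simp only [Complex.add_re, Complex.ofReal_re, Complex.mul_re, Complex.I_re, mul_zero,
        Complex.ofReal_im, Complex.I_im, mul_one, zero_sub, sub_neg_eq_add, zero_mul, sub_zero,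
        add_zero] at h1
      rw [abs_le] at h1
      simp only [Set.mem_Ioc, not_and_or, not_lt, not_le] at hmem
      rcases hmem with h | h <;> linarith
    simp [hz]
  rw [houter]
  rw [intervalIntegral.integral_congr (fun x _ => hinner x)]
  exact key2


lemma opnorm_aux (L : ℂ →L[ℝ] ℝ) :
    ‖Complex.I * ((L 1 : ℝ) : ℂ) - ((L Complex.I : ℝ) : ℂ)‖ ≤ ‖L‖ := by
  set a : ℝ := L 1 with ha
  set b : ℝ := L Complex.I with hb
  set N : ℝ := ‖Complex.I * (a : ℂ) - (b : ℂ)‖ with hN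
  have hN0 : 0 ≤ N := norm_nonneg _
  have hsq : ∀ z : ℂ, ‖z‖ ^ 2 = z.re ^ 2 + z.im ^ 2 := fun z => by
    rw [Complex.sq_norm, Complex.normSq_apply]; ring
  have hNsq : N ^ 2 = a ^ 2 + b ^ 2 := by
    rw [hN, hsq]; simp; ring
  rcases eq_or_lt_of_le hN0 with h0 | hpos
  · rw [← h0]; exact norm_nonneg L
  · have hv : ‖(a : ℂ) + b * Complex.I‖ = N := by
      have : ‖(a : ℂ) + b * Complex.I‖ ^ 2 = a ^ 2 + b ^ 2 := by
        rw [hsq]; simp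
      nlinarith [norm_nonneg ((a : ℂ) + b * Complex.I)]
    have hLv : L ((a : ℂ) + b * Complex.I) = a ^ 2 + b ^ 2 := by
      have : (a : ℂ) + b * Complex.I = a • (1 : ℂ) + b • Complex.I := by
        simp [Complex.real_smul]
      rw [this, map_add, L.map_smul, L.map_smul, ← ha, ← hb]
      simp [smul_eq_mul]; ring
    have hle : a ^ 2 + b ^ 2 ≤ ‖L‖ * N := by
      calc a ^ 2 + b ^ 2 = L ((a : ℂ) + b * Complex.I) := hLv.symm
        _ ≤ |L ((a : ℂ) + b * Complex.I)| := le_abs_self _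
        _ ≤ ‖L‖ * ‖(a : ℂ) + b * Complex.I‖ := L.le_opNorm _
        _ = ‖L‖ * N := by rw [hv]
    have := hNsq ▸ hle
    nlinarith

lemma key_identity (Ω : Set ℂ) (hΩopen : IsOpen Ω)
    (u : ℂ → ℝ) (hu : ContDiff ℝ (⊤ : ℕ∞) u) (husupp : HasCompactSupport u)
    (hsupp : tsupport u ⊆ Ω)
    (f : ℂ → ℂ) (hf : DifferentiableOn ℂ f Ω) :
    (2 * I) * ((∫ z in Ω, u z : ℝ) : ℂ)
      + ∫ z in Ω, ((starRingEnd ℂ) z - f z) *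
          (I * ((fderiv ℝ u z 1 : ℝ) : ℂ) - ((fderiv ℝ u z I : ℝ) : ℂ)) = 0 := by
  set h : ℂ → ℂ := fun z => ((starRingEnd ℂ) z - f z) *
      (I * ((fderiv ℝ u z 1 : ℝ) : ℂ) - ((fderiv ℝ u z I : ℝ) : ℂ)) with hh
  set G : ℂ → ℂ := fun z => 2 * I * ((u z : ℝ) : ℂ) + h z with hG
  set W : ℂ → ℂ := fun z => ((starRingEnd ℂ) z - f z) * ((u z : ℝ) : ℂ) with hW
  have hucont : Continuous u := hu.continuous
  have hudiff : Differentiable ℝ u := hu.differentiable (by simp)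
  have hducont : Continuous (fun z => fderiv ℝ u z) := hu.continuous_fderiv (by simp)
  have hzero : ∀ z ∉ tsupport u, u z = 0 := fun z hz => image_eq_zero_of_notMem_tsupport hz
  have hdzero : ∀ z ∉ tsupport u, fderiv ℝ u z = 0 := by
    intro z hz
    by_contra hne
    exact hz (support_fderiv_subset ℝ hne)
  -- eventually-zero facts off the support
  have hWev : ∀ z ∉ tsupport u, W =ᶠ[nhds z] 0 := by
    intro z hz
    filter_upwards [(isClosed_tsupport u).isOpen_compl.mem_nhds hz] with w hw
    simp [hW, hzero w hw]
  have hGev : ∀ z ∉ tsupport u, G =ᶠ[nhds z] 0 := by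
    intro z hz
    filter_upwards [(isClosed_tsupport u).isOpen_compl.mem_nhds hz] with w hw
    simp [hG, hh, hzero w hw, hdzero w hw]
  -- explicit derivative of W on Ω
  have hWder : ∀ z ∈ Ω, HasFDerivAt W
      ((((starRingEnd ℂ) z - f z) • (Complex.ofRealCLM.comp (fderiv ℝ u z))) +
        ((Complex.conjCLE.toContinuousLinearMap - (fderiv ℂ f z).restrictScalars ℝ).smulRight
          ((u z : ℝ) : ℂ))) z := by
    intro z hz
    have hfd : DifferentiableAt ℂ f z := hf.differentiableAt (hΩopen.mem_nhds hz)
    have hA : HasFDerivAt f ((fderiv ℂ f z).restrictScalars ℝ) z := hfd.hasFDerivAt.restrictScalars ℝ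
    have hconj : HasFDerivAt (fun w : ℂ => (starRingEnd ℂ) w)
        (Complex.conjCLE.toContinuousLinearMap) z :=
      Complex.conjCLE.toContinuousLinearMap.hasFDerivAt
    have hC : HasFDerivAt (fun w => (starRingEnd ℂ) w - f w)
        (Complex.conjCLE.toContinuousLinearMap - (fderiv ℂ f z).restrictScalars ℝ) z :=
      hconj.sub hA
    have hU : HasFDerivAt (fun w => ((u w : ℝ) : ℂ)) (Complex.ofRealCLM.comp (fderiv ℝ u z)) z :=
      Complex.ofRealCLM.hasFDerivAt.comp z (hudiff z).hasFDerivAt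
    exact hC.mul' hU
  have hWdiff : Differentiable ℝ W := by
    intro z
    by_cases hz : z ∈ tsupport u
    · exact (hWder z (hsupp hz)).differentiableAt
    · exact (differentiableAt_const (0 : ℂ)).congr_of_eventuallyEq (hWev z hz)
  have hform : ∀ z, I • fderiv ℝ W z 1 - fderiv ℝ W z I = G z := by
    intro z
    by_cases hz : z ∈ tsupport u
    · rw [(hWder z (hsupp hz)).fderiv]
      have hmI : fderiv ℂ f z I = I * fderiv ℂ f z 1 := by
        conv_lhs => rw [show (I : ℂ) = I • (1 : ℂ) by simp]
        rw [_root_.map_smul, smul_eq_mul]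
      simp only [ContinuousLinearMap.add_apply, ContinuousLinearMap.coe_smul',
        Pi.smul_apply, ContinuousLinearMap.smulRight_apply, ContinuousLinearMap.comp_apply,
        ContinuousLinearMap.coe_sub', Pi.sub_apply,
        ContinuousLinearMap.coe_restrictScalars', Complex.ofRealCLM_apply,
        ContinuousLinearEquiv.coe_coe, Complex.conjCLE_apply, hG, hh]
      simp only [smul_eq_mul, map_one, Complex.conj_I]
      rw [hmI]
      ring
    · have hfd : fderiv ℝ W z = 0 := by
        rw [(hWev z hz).fderiv_eq]
        exact fderiv_const_apply 0
      rw [hfd]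
      have : G z = 0 := by simp [hG, hh, hzero z hz, hdzero z hz]
      rw [this]
      simp
  have hUcont : Continuous (fun z => 2 * I * ((u z : ℝ) : ℂ)) := by
    continuity
  have hUsupp : HasCompactSupport (fun z => 2 * I * ((u z : ℝ) : ℂ)) :=
    HasCompactSupport.intro husupp (fun z hz => by simp [hzero z hz])
  have hUint : Integrable (fun z => 2 * I * ((u z : ℝ) : ℂ)) :=
    hUcont.integrable_of_hasCompactSupport hUsupp
  have hGcont : Continuous G := by
    rw [continuous_iff_continuousAt]
    intro z
    by_cases hz : z ∈ Ω
    · have hcon : ContinuousOn G Ω := by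
        apply ContinuousOn.add hUcont.continuousOn
        apply ContinuousOn.mul
        · exact (Complex.continuous_conj.continuousOn.sub hf.continuousOn)
        · apply Continuous.continuousOn
          have h1 : Continuous (fun z => ((fderiv ℝ u z 1 : ℝ) : ℂ)) :=
            Complex.continuous_ofReal.comp
              ((ContinuousLinearMap.apply ℝ ℝ (1 : ℂ)).continuous.comp hducont)
          have h2 : Continuous (fun z => ((fderiv ℝ u z I : ℝ) : ℂ)) :=
            Complex.continuous_ofReal.comp
              ((ContinuousLinearMap.apply ℝ ℝ (I : ℂ)).continuous.comp hducont)
          exact ((continuous_const.mul h1).sub h2)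
      exact hcon.continuousAt (hΩopen.mem_nhds hz)
    · have hz' : z ∉ tsupport u := fun hmem => hz (hsupp hmem)
      exact continuousAt_const.congr (hGev z hz').symm
  have hGsupp : HasCompactSupport G :=
    HasCompactSupport.intro husupp (fun z hz => by simp [hG, hh, hzero z hz, hdzero z hz])
  have hhcont : Continuous h := by
    have : h = fun z => G z - 2 * I * ((u z : ℝ) : ℂ) := by
      ext z; simp [hG]
    rw [this]
    exact hGcont.sub hUcont
  have hhsupp : HasCompactSupport h :=
    HasCompactSupport.intro husupp (fun z hz => by simp [hh, hdzero z hz])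
  have hhint : Integrable h := hhcont.integrable_of_hasCompactSupport hhsupp
  have hfunext : (fun z => I • fderiv ℝ W z 1 - fderiv ℝ W z I) = G := funext hform
  have hWsupp : HasCompactSupport W :=
    HasCompactSupport.intro husupp (fun z hz => by simp [hW, hzero z hz])
  have hdiv := divergence_aux W hWdiff hWsupp (by rw [hfunext]; exact hGcont)
  rw [hfunext, hG] at hdiv
  rw [integral_add hUint hhint, integral_const_mul] at hdiv
  have e1 : ∫ z, ((u z : ℝ) : ℂ) = ∫ z in Ω, ((u z : ℝ) : ℂ) :=
    (setIntegral_eq_integral_of_forall_compl_eq_zero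
      (fun z hz => by simp [hzero z (fun hmem => hz (hsupp hmem))])).symm
  have e2 : ∫ z, h z = ∫ z in Ω, h z :=
    (setIntegral_eq_integral_of_forall_compl_eq_zero
      (fun z hz => by simp [hh, hdzero z (fun hmem => hz (hsupp hmem))])).symm
  have e3 : ((∫ z in Ω, u z : ℝ) : ℂ) = ∫ z in Ω, ((u z : ℝ) : ℂ) :=
    (integral_ofReal (𝕜 := ℂ) (f := u)).symm
  rw [e1, e2] at hdiv
  rw [e3]
  exact hdiv

/-- Lower bound for the Bergman analytic content: for any real-valued `u ∈ W₀^{1,2}(Ω)`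
(here a nonzero smooth function compactly supported in `Ω`),
`λ_{A²}(Ω) ≥ 2 |∫_Ω u dA| / ‖∇u‖_{L²(Ω)}`. -/
theorem bergman_content_lower_bound
    (Ω : Set ℂ) (hΩopen : IsOpen Ω) (hΩconn : IsConnected Ω)
    (hΩbdd : Bornology.IsBounded Ω) (hΩsc : SimplyConnectedSpace Ω)
    (u : ℂ → ℝ) (hu : ContDiff ℝ (⊤ : ℕ∞) u) (husupp : HasCompactSupport u)
    (hsupp : tsupport u ⊆ Ω) (hune : u ≠ 0) :
    2 * |∫ z in Ω, u z| / Real.sqrt (∫ z in Ω, ‖fderiv ℝ u z‖ ^ 2) ≤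
      sInf {r : ℝ | ∃ f : ℂ → ℂ, DifferentiableOn ℂ f Ω ∧
        MemLp f 2 (volume.restrict Ω) ∧
        r = Real.sqrt (∫ z in Ω, ‖(starRingEnd ℂ) z - f z‖ ^ 2)} := by
  have hudiff : Differentiable ℝ u := hu.differentiable (by simp)
  have hducont : Continuous (fun z => fderiv ℝ u z) := hu.continuous_fderiv (by simp)
  have hzero : ∀ z ∉ tsupport u, u z = 0 := fun z hz => image_eq_zero_of_notMem_tsupport hz
  have hdzero : ∀ z ∉ tsupport u, fderiv ℝ u z = 0 := by
    intro z hz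
    by_contra hne
    exact hz (support_fderiv_subset ℝ hne)
  obtain ⟨M, hM⟩ := hΩbdd.subset_closedBall 0
  haveI : IsFiniteMeasure (volume.restrict Ω) := by
    constructor
    rw [Measure.restrict_apply_univ]
    exact lt_of_le_of_lt (measure_mono hM) measure_closedBall_lt_top
  set N : ℂ → ℝ := fun z => ‖I * ((fderiv ℝ u z 1 : ℝ) : ℂ) - ((fderiv ℝ u z I : ℝ) : ℂ)‖
    with hNdef
  have hNcont : Continuous N := by
    have h1 : Continuous (fun z => ((fderiv ℝ u z 1 : ℝ) : ℂ)) :=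
      Complex.continuous_ofReal.comp
        ((ContinuousLinearMap.apply ℝ ℝ (1 : ℂ)).continuous.comp hducont)
    have h2 : Continuous (fun z => ((fderiv ℝ u z I : ℝ) : ℂ)) :=
      Complex.continuous_ofReal.comp
        ((ContinuousLinearMap.apply ℝ ℝ (I : ℂ)).continuous.comp hducont)
    exact ((continuous_const.mul h1).sub h2).norm
  have hNsupp : HasCompactSupport N :=
    HasCompactSupport.intro husupp (fun z hz => by simp [hNdef, hdzero z hz])
  have hNle : ∀ z, N z ≤ ‖fderiv ℝ u z‖ := fun z => opnorm_aux (fderiv ℝ u z)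
  have hdusq_cont : Continuous (fun z => ‖fderiv ℝ u z‖ ^ 2) := (hducont.norm).pow 2
  have hdusq_supp : HasCompactSupport (fun z => ‖fderiv ℝ u z‖ ^ 2) :=
    HasCompactSupport.intro husupp (fun z hz => by simp [hdzero z hz])
  have hdusq_int : Integrable (fun z => ‖fderiv ℝ u z‖ ^ 2) :=
    hdusq_cont.integrable_of_hasCompactSupport hdusq_supp
  have hDpos : 0 < Real.sqrt (∫ z in Ω, ‖fderiv ℝ u z‖ ^ 2) := by
    apply Real.sqrt_pos.2
    obtain ⟨z₀, hz₀⟩ : ∃ z₀, fderiv ℝ u z₀ ≠ 0 := by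
      by_contra hcon
      push_neg at hcon
      apply hune
      obtain ⟨R, hR⟩ := husupp.isBounded.subset_closedBall 0
      have hconst := is_const_of_fderiv_eq_zero hudiff hcon
      funext z
      have hout : (⟨R + 1, 0⟩ : ℂ) ∉ tsupport u := by
        intro hmem
        have h0 := hR hmem
        simp only [Metric.mem_closedBall, dist_zero_right] at h0
        have h1 := le_trans (Complex.abs_re_le_norm (⟨R + 1, 0⟩ : ℂ)) h0
        have h2 : R + 1 ≤ R := le_trans (le_abs_self _) h1
        linarith
      rw [hconst z ⟨R + 1, 0⟩, hzero _ hout]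
      rfl
    have hz₀Ω : z₀ ∈ Ω := hsupp (support_fderiv_subset ℝ hz₀)
    have hpos₀ : 0 < ‖fderiv ℝ u z₀‖ ^ 2 := pow_pos (norm_pos_iff.mpr hz₀) 2
    have hopen : IsOpen ({z | ‖fderiv ℝ u z₀‖ ^ 2 / 2 < ‖fderiv ℝ u z‖ ^ 2} ∩ Ω) :=
      (isOpen_lt continuous_const hdusq_cont).inter hΩopen
    obtain ⟨ε, hεpos, hball⟩ := Metric.isOpen_iff.1 hopen z₀ ⟨by simpa using by linarith, hz₀Ω⟩
    have hballpos : 0 < (volume (Metric.ball z₀ ε)).toReal := by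
      rw [ENNReal.toReal_pos_iff]
      exact ⟨Metric.measure_ball_pos _ _ hεpos, measure_ball_lt_top⟩
    calc (0 : ℝ) < (‖fderiv ℝ u z₀‖ ^ 2 / 2) * (volume (Metric.ball z₀ ε)).toReal := by positivity
      _ ≤ ∫ z in Metric.ball z₀ ε, ‖fderiv ℝ u z‖ ^ 2 := by
          have := setIntegral_ge_of_const_le measurableSet_ball measure_ball_lt_top.ne
            (fun z hz => (hball hz).1.le) hdusq_int.integrableOn
          rw [smul_eq_mul, mul_comm] at this
          exact this
      _ ≤ ∫ z in Ω, ‖fderiv ℝ u z‖ ^ 2 := by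
          apply setIntegral_mono_set hdusq_int.integrableOn
            (ae_of_all _ fun z => by positivity)
          exact HasSubset.Subset.eventuallyLE (fun z hz => (hball hz).2)
  apply le_csInf
  · exact ⟨_, 0, differentiableOn_const 0, MemLp.zero, rfl⟩
  rintro b ⟨f, hfdiff, hfmem, rfl⟩
  rw [div_le_iff₀ hDpos]
  set c : ℂ → ℂ := fun z => (starRingEnd ℂ) z - f z with hcdef
  set h : ℂ → ℂ := fun z => c z *
      (I * ((fderiv ℝ u z 1 : ℝ) : ℂ) - ((fderiv ℝ u z I : ℝ) : ℂ)) with hhdef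
  have hkey := key_identity Ω hΩopen u hu husupp hsupp f hfdiff
  have hid : (2 * I) * ((∫ z in Ω, u z : ℝ) : ℂ) = - ∫ z in Ω, h z :=
    eq_neg_of_add_eq_zero_left hkey
  have hnorm : 2 * |∫ z in Ω, u z| = ‖∫ z in Ω, h z‖ := by
    rw [← norm_neg, ← hid, norm_mul]
    simp [Complex.norm_real, Real.norm_eq_abs, Complex.norm_I]
  -- Memℒp facts
  have hconjmem : MemLp (fun z => (starRingEnd ℂ) z) 2 (volume.restrict Ω) := by
    apply MemLp.of_bound (Complex.continuous_conj.aestronglyMeasurable) M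
    refine (ae_restrict_iff' hΩopen.measurableSet).2 (ae_of_all _ fun z hz => ?_)
    have := hM hz
    simp only [Metric.mem_closedBall, dist_zero_right] at this
    simpa using this
  have hcnorm : MemLp (fun z => ‖c z‖) 2 (volume.restrict Ω) := (hconjmem.sub hfmem).norm
  have hNmem : MemLp N 2 (volume.restrict Ω) :=
    (hNcont.memLp_of_hasCompactSupport hNsupp).restrict Ω
  have h22 : ENNReal.ofReal (2 : ℝ) = 2 := by
    rw [ENNReal.ofReal_ofNat]
  rw [← h22] at hcnorm hNmem
  have hconj2 : Real.HolderConjugate 2 2 := Real.HolderConjugate.two_two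
  have hHolder := integral_mul_le_Lp_mul_Lq_of_nonneg hconj2
    (ae_of_all _ fun z => norm_nonneg (c z)) (ae_of_all _ fun z => norm_nonneg _)
    hcnorm hNmem
  have hrpow : ∀ g : ℂ → ℝ, (∫ z in Ω, g z ^ (2 : ℝ)) = ∫ z in Ω, g z ^ 2 := by
    intro g
    apply integral_congr_ae
    exact ae_of_all _ fun z => Real.rpow_two (g z)
  rw [hrpow (fun z => ‖c z‖), hrpow N] at hHolder
  have hmono : (∫ z in Ω, N z ^ 2) ≤ ∫ z in Ω, ‖fderiv ℝ u z‖ ^ 2 := by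
    apply setIntegral_mono
      (((hNcont.pow 2).integrable_of_hasCompactSupport
        (HasCompactSupport.intro husupp
          (fun z hz => by simp [hNdef, hdzero z hz])))).integrableOn
      hdusq_int.integrableOn
    intro z
    exact pow_le_pow_left₀ (norm_nonneg _) (hNle z) 2
  calc 2 * |∫ z in Ω, u z| = ‖∫ z in Ω, h z‖ := hnorm
    _ ≤ ∫ z in Ω, ‖h z‖ := norm_integral_le_integral_norm _
    _ = ∫ z in Ω, ‖c z‖ * N z := by
        apply integral_congr_ae
        exact ae_of_all _ fun z => norm_mul _ _
    _ ≤ (∫ z in Ω, ‖c z‖ ^ 2) ^ ((1:ℝ)/2) * (∫ z in Ω, N z ^ 2) ^ ((1:ℝ)/2) := hHolder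
    _ = Real.sqrt (∫ z in Ω, ‖c z‖ ^ 2) * Real.sqrt (∫ z in Ω, N z ^ 2) := by
        rw [Real.sqrt_eq_rpow, Real.sqrt_eq_rpow]
    _ ≤ Real.sqrt (∫ z in Ω, ‖c z‖ ^ 2) * Real.sqrt (∫ z in Ω, ‖fderiv ℝ u z‖ ^ 2) := by
        apply mul_le_mul_of_nonneg_left (Real.sqrt_le_sqrt hmono) (Real.sqrt_nonneg _)
end

section
/- Let Ω ⊂ ℂ be a bounded simply connected domain with piecewise smooth boundary. Then λ_{A²}(Ω) ≥ √ρ(Ω), where ρ(Ω) is the torsional rigidity of Ω, defined by ρ(Ω) = sup_{u ∈ W₀^{1,2}(Ω), u ≢ 0} 4(∫_Ω u dA)² / ‖∇u‖²_{L²(Ω)}; equivalently ρ(Ω) = 2∫_Ω w dA where w solves Δw = −2 in Ω, w = 0 on ∂Ω. -/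
open MeasureTheory Complex



lemma integral_deriv_eq_zero' {g : ℝ → ℂ} (hg : ContDiff ℝ 1 g) (hs : HasCompactSupport g) :
    ∫ x, deriv g x = 0 := by
  have hint : Integrable (deriv g) :=
    (hg.continuous_deriv le_rfl).integrable_of_hasCompactSupport hs.deriv
  rw [← intervalIntegral.integral_Iic_add_Ioi (b := 0) hint.integrableOn hint.integrableOn,
    hs.integral_Iic_deriv_eq hg, hs.integral_Ioi_deriv_eq hg, add_neg_cancel]

lemma phi_closedEmbedding : Topology.IsClosedEmbedding (fun p : ℝ × ℝ => (p.1 : ℂ) + p.2 * I) := by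
  have : (fun p : ℝ × ℝ => (p.1 : ℂ) + p.2 * I)
      = ⇑(Complex.equivRealProdCLM.symm.toHomeomorph) := by
    ext p
    simp [Complex.equivRealProdCLM_symm_apply]
  rw [this]
  exact Complex.equivRealProdCLM.symm.toHomeomorph.isClosedEmbedding

section Dir
variable {F : ℂ → ℂ} (hF : ContDiff ℝ 1 F) (hs : HasCompactSupport F)

include hF hs in
lemma prod_int (v : ℂ) :
    Integrable (fun p : ℝ × ℝ => fderiv ℝ F ((p.1 : ℂ) + p.2 * I) v)
      ((volume : Measure ℝ).prod (volume : Measure ℝ)) := by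
  rw [← MeasureTheory.Measure.volume_eq_prod ℝ ℝ]
  have hc : Continuous (fun z => fderiv ℝ F z v) :=
    (hF.continuous_fderiv one_ne_zero).clm_apply continuous_const
  have hcs : HasCompactSupport (fun z => fderiv ℝ F z v) :=
    (hs.fderiv ℝ).comp_left (g := fun L : ℂ →L[ℝ] ℂ => L v) rfl
  exact (hc.comp phi_closedEmbedding.continuous).integrable_of_hasCompactSupport
    (hcs.comp_isClosedEmbedding phi_closedEmbedding)

include hF hs in
lemma integral_eq_prod (v : ℂ) :
    (∫ z : ℂ, fderiv ℝ F z v) = ∫ p : ℝ × ℝ, fderiv ℝ F ((p.1 : ℂ) + p.2 * I) v := by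
  rw [← (Complex.volume_preserving_equiv_real_prod).integral_comp
    Complex.measurableEquivRealProd.measurableEmbedding
    (fun p : ℝ × ℝ => fderiv ℝ F ((p.1 : ℂ) + p.2 * I) v)]
  congr 1
  ext z
  rw [Complex.measurableEquivRealProd_apply]
  simp [Complex.re_add_im]

include hF hs in
lemma deriv_slice_y (x : ℝ) (y : ℝ) :
    HasDerivAt (fun y : ℝ => F ((x : ℂ) + y * I)) (fderiv ℝ F ((x : ℂ) + y * I) I) y := by
  have h1 : HasDerivAt (fun y : ℝ => (x : ℂ) + y * I) I y := by
    simpa using ((Complex.ofRealCLM.hasDerivAt (x := y)).mul_const I).const_add (x : ℂ)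
  exact ((hF.differentiable one_ne_zero _).hasFDerivAt).comp_hasDerivAt y h1

include hF hs in
lemma deriv_slice_x (y : ℝ) (x : ℝ) :
    HasDerivAt (fun x : ℝ => F ((x : ℂ) + y * I)) (fderiv ℝ F ((x : ℂ) + y * I) 1) x := by
  have h1 : HasDerivAt (fun x : ℝ => (x : ℂ) + y * I) 1 x := by
    simpa using (Complex.ofRealCLM.hasDerivAt (x := x)).add_const ((y : ℂ) * I)
  exact ((hF.differentiable one_ne_zero _).hasFDerivAt).comp_hasDerivAt x h1

include hF hs in
lemma slice_cd_y (x : ℝ) : ContDiff ℝ 1 (fun y : ℝ => F ((x : ℂ) + y * I)) := by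
  exact hF.comp (contDiff_const.add ((Complex.ofRealCLM.contDiff).mul contDiff_const))

include hF hs in
lemma slice_cs_y (x : ℝ) : HasCompactSupport (fun y : ℝ => F ((x : ℂ) + y * I)) := by
  apply hs.comp_isClosedEmbedding
  apply Isometry.isClosedEmbedding
  apply Isometry.of_dist_eq
  intro a b
  rw [dist_add_left, Complex.dist_eq, ← sub_mul]
  simp [Real.dist_eq, ← Complex.ofReal_sub]

end Dir

section Dir2
variable {F : ℂ → ℂ} (hF : ContDiff ℝ 1 F) (hs : HasCompactSupport F)

include hF hs in
lemma slice_cd_x (y : ℝ) : ContDiff ℝ 1 (fun x : ℝ => F ((x : ℂ) + y * I)) :=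
  hF.comp ((Complex.ofRealCLM.contDiff).add contDiff_const)

include hF hs in
lemma slice_cs_x (y : ℝ) : HasCompactSupport (fun x : ℝ => F ((x : ℂ) + y * I)) := by
  apply hs.comp_isClosedEmbedding
  apply Isometry.isClosedEmbedding
  apply Isometry.of_dist_eq
  intro a b
  rw [dist_add_right, Complex.dist_eq, ← Complex.ofReal_sub, Complex.norm_real, Real.norm_eq_abs, Real.dist_eq]

include hF hs in
lemma integral_fderiv_I_eq_zero : (∫ z : ℂ, fderiv ℝ F z I) = 0 := by
  rw [integral_eq_prod hF hs I,
    show (volume : Measure (ℝ × ℝ)) = (volume : Measure ℝ).prod volume from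
      MeasureTheory.Measure.volume_eq_prod ℝ ℝ,
    MeasureTheory.integral_prod _ (prod_int hF hs I)]
  have : ∀ x : ℝ, (∫ y : ℝ, fderiv ℝ F ((x : ℂ) + y * I) I) = 0 := by
    intro x
    have : (fun y : ℝ => fderiv ℝ F ((x : ℂ) + y * I) I)
        = deriv (fun y : ℝ => F ((x : ℂ) + y * I)) := by
      ext y; exact ((deriv_slice_y hF hs x y).deriv).symm
    rw [this, integral_deriv_eq_zero' (slice_cd_y hF hs x) (slice_cs_y hF hs x)]
  simp [this]

include hF hs in
lemma integral_fderiv_one_eq_zero : (∫ z : ℂ, fderiv ℝ F z 1) = 0 := by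
  rw [integral_eq_prod hF hs 1,
    show (volume : Measure (ℝ × ℝ)) = (volume : Measure ℝ).prod volume from
      MeasureTheory.Measure.volume_eq_prod ℝ ℝ,
    MeasureTheory.integral_prod _ (prod_int hF hs 1),
    MeasureTheory.integral_integral_swap (prod_int hF hs 1)]
  have : ∀ y : ℝ, (∫ x : ℝ, fderiv ℝ F ((x : ℂ) + y * I) 1) = 0 := by
    intro y
    have : (fun x : ℝ => fderiv ℝ F ((x : ℂ) + y * I) 1)
        = deriv (fun x : ℝ => F ((x : ℂ) + y * I)) := by
      ext x; exact ((deriv_slice_x hF hs y x).deriv).symm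
    rw [this, integral_deriv_eq_zero' (slice_cd_x hF hs y) (slice_cs_x hF hs y)]
  simp [this]
end Dir2

lemma integral_dbar_combo_eq_zero {F : ℂ → ℂ} (hF : ContDiff ℝ 1 F) (hs : HasCompactSupport F) :
    ∫ z : ℂ, (fderiv ℝ F z 1 + I * fderiv ℝ F z I) = 0 := by
  have hc : ∀ v : ℂ, Continuous (fun z => fderiv ℝ F z v) := fun v =>
    (hF.continuous_fderiv one_ne_zero).clm_apply continuous_const
  have hcs : ∀ v : ℂ, HasCompactSupport (fun z => fderiv ℝ F z v) := fun v =>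
    (hs.fderiv ℝ).comp_left (g := fun L : ℂ →L[ℝ] ℂ => L v) rfl
  have int1 : Integrable (fun z : ℂ => fderiv ℝ F z 1) :=
    (hc 1).integrable_of_hasCompactSupport (hcs 1)
  have intI : Integrable (fun z : ℂ => I * fderiv ℝ F z I) :=
    ((continuous_const.mul (hc I)).integrable_of_hasCompactSupport ((hcs I).mul_left))
  rw [MeasureTheory.integral_add int1 intI, integral_fderiv_one_eq_zero hF hs,
    MeasureTheory.integral_const_mul, integral_fderiv_I_eq_zero hF hs, mul_zero, add_zero]

set_option maxHeartbeats 1000000 in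
lemma key_ineq (Ω : Set ℂ) (hΩopen : IsOpen Ω) (hΩbdd : Bornology.IsBounded Ω)
    (u : ℂ → ℝ) (hu : ContDiff ℝ (⊤ : ℕ∞) u) (hcs : HasCompactSupport u)
    (hsupp : tsupport u ⊆ Ω)
    (f : ℂ → ℂ) (hf : DifferentiableOn ℂ f Ω) (hfL2 : MemLp f 2 (volume.restrict Ω)) :
    4 * (∫ z in Ω, u z) ^ 2 ≤
      (∫ z in Ω, ‖(starRingEnd ℂ) z - f z‖ ^ 2) * (∫ z in Ω, ‖fderiv ℝ u z‖ ^ 2) := by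
  classical
  have hu1 : ContDiff ℝ 1 u := hu.of_le (by simp)
  set U : ℂ → ℂ := fun z => ((u z : ℝ) : ℂ) with hUdef
  have hU : ContDiff ℝ 1 U := Complex.ofRealCLM.contDiff.comp hu1
  have hUs : HasCompactSupport U :=
    hcs.comp_left (g := fun x : ℝ => (x : ℂ)) (by simp)
  have hUfd : ∀ z v, fderiv ℝ U z v = ((fderiv ℝ u z v : ℝ) : ℂ) := by
    intro z v
    have h := (Complex.ofRealCLM.hasFDerivAt.comp z
      (hu1.differentiable one_ne_zero z).hasFDerivAt).fderiv
    have : fderiv ℝ U z = Complex.ofRealCLM.comp (fderiv ℝ u z) := h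
    rw [this]; rfl
  set D : ℂ → ℂ := fun z => fderiv ℝ U z 1 + I * fderiv ℝ U z I with hDdef
  have hDcont : Continuous D := by
    have h := hU.continuous_fderiv one_ne_zero
    exact (h.clm_apply continuous_const).add (continuous_const.mul (h.clm_apply continuous_const))
  have hDs : HasCompactSupport D :=
    (hUs.fderiv ℝ).comp_left (g := fun L : ℂ →L[ℝ] ℂ => L 1 + I * L I) (by simp)
  have hsuppU : Function.support U ⊆ Function.support u := by
    intro x hx
    simp only [Function.mem_support, hUdef, Ne, Complex.ofReal_eq_zero] at hx ⊢
    exact hx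
  have htsuppU : tsupport U ⊆ tsupport u := closure_mono hsuppU
  have hDts : ∀ z ∉ tsupport u, D z = 0 := by
    intro z hz
    have hz' : z ∉ tsupport U := fun h => hz (htsuppU h)
    have h0 : fderiv ℝ U z = 0 := by
      have heq : U =ᶠ[nhds z] 0 := notMem_tsupport_iff_eventuallyEq.mp hz'
      rw [heq.fderiv_eq]
      exact fderiv_const_apply 0
    simp [hDdef, h0]
  have hDle : ∀ z, ‖D z‖ ≤ ‖fderiv ℝ u z‖ := by
    intro z
    set L := fderiv ℝ u z with hL
    set a := L 1 with ha
    set b := L I with hb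
    have hDz : D z = ((a : ℝ) : ℂ) + I * b := by
      simp [hDdef, hUfd, ha, hb, hL]
    have hDnorm : ‖D z‖ = Real.sqrt (a ^ 2 + b ^ 2) := by
      rw [hDz, Complex.norm_def, Complex.normSq_apply]
      norm_num
      ring_nf
    set w : ℂ := a • (1 : ℂ) + b • I with hw
    have hwnorm : ‖w‖ = Real.sqrt (a ^ 2 + b ^ 2) := by
      rw [hw, Complex.norm_def, Complex.normSq_apply]
      norm_num
      ring_nf
    have hLw : L w = a ^ 2 + b ^ 2 := by
      rw [hw, map_add, L.map_smul, L.map_smul, smul_eq_mul, smul_eq_mul, ← ha, ← hb]; ring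
    have hop := L.le_opNorm w
    rw [hLw, hwnorm] at hop
    rw [hDnorm]
    set s := Real.sqrt (a ^ 2 + b ^ 2) with hs
    have hs0 : 0 ≤ s := Real.sqrt_nonneg _
    have hs2 : s ^ 2 = a ^ 2 + b ^ 2 := Real.sq_sqrt (by positivity)
    rcases eq_or_lt_of_le hs0 with h | h
    · rw [← h]; exact norm_nonneg _
    · have : s * s ≤ ‖L‖ * s := by
        have : ‖(a ^ 2 + b ^ 2 : ℝ)‖ = s * s := by
          rw [Real.norm_of_nonneg (by positivity), ← hs2]; ring
        rw [this] at hop; exact hop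
      exact le_of_mul_le_mul_right this h
  -- conj as a smooth function
  have hconjFD : ∀ z : ℂ, HasFDerivAt (fun w : ℂ => (starRingEnd ℂ) w)
      (Complex.conjCLE.toContinuousLinearMap) z := by
    intro z
    have := Complex.conjCLE.toContinuousLinearMap.hasFDerivAt (x := z)
    convert this using 2
    simp
  have hconjCD : ContDiff ℝ 1 (fun w : ℂ => (starRingEnd ℂ) w) := by
    have : ContDiff ℝ 1 (⇑Complex.conjCLE.toContinuousLinearMap) :=
      Complex.conjCLE.toContinuousLinearMap.contDiff
    convert this using 2
    simp
  -- Claim A : ∫ conj z * D z = -2 ∫ U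
  have claimA : (∫ z : ℂ, (starRingEnd ℂ) z * D z) = -2 * ∫ z : ℂ, U z := by
    set G : ℂ → ℂ := fun w => (starRingEnd ℂ) w * U w with hGdef
    have hG : ContDiff ℝ 1 G := hconjCD.mul hU
    have hGs : HasCompactSupport G := hUs.mul_left
    have hpt : ∀ z : ℂ, fderiv ℝ G z 1 + I * fderiv ℝ G z I
        = (starRingEnd ℂ) z * D z + 2 * U z := by
      intro z
      have hd := ((hconjFD z).mul' (hU.differentiable one_ne_zero z).hasFDerivAt).fderiv
      rw [hGdef]
      rw [show (fun w => (starRingEnd ℂ) w * U w) = (fun w : ℂ => (starRingEnd ℂ) w) * U from rfl, hd]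
      simp only [ContinuousLinearMap.add_apply, ContinuousLinearMap.smul_apply,
        ContinuousLinearMap.smulRight_apply, ContinuousLinearEquiv.coe_coe,
        Complex.conjCLE_apply, smul_eq_mul, op_smul_eq_mul]
      rw [hDdef]
      simp only [map_one, Complex.conj_I]
      linear_combination (-(U z) : ℂ) * Complex.I_sq
    have hint : Integrable (fun z : ℂ => (starRingEnd ℂ) z * D z) :=
      (Complex.continuous_conj.mul hDcont).integrable_of_hasCompactSupport hDs.mul_left
    have hintU : Integrable U := hU.continuous.integrable_of_hasCompactSupport hUs
    have h0 := integral_dbar_combo_eq_zero hG hGs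
    rw [show (fun z : ℂ => fderiv ℝ G z 1 + I * fderiv ℝ G z I)
        = fun z : ℂ => (starRingEnd ℂ) z * D z + 2 * U z from funext hpt] at h0
    rw [MeasureTheory.integral_add hint (hintU.const_mul 2),
      MeasureTheory.integral_const_mul] at h0
    linear_combination h0
  have hcover : ∀ z : ℂ, z ∈ Ω ∨ z ∉ tsupport u := fun z => by
    by_cases h : z ∈ tsupport u
    · exact Or.inl (hsupp h)
    · exact Or.inr h
  have hopenc : IsOpen (tsupport u)ᶜ := (isClosed_tsupport u).isOpen_compl
  -- Claim B : ∫ f z * D z = 0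
  have claimB : (∫ z : ℂ, f z * D z) = 0 := by
    set F : ℂ → ℂ := Ω.indicator (fun w => f w * U w) with hFdef
    have hFloc1 : ∀ z ∈ Ω, F =ᶠ[nhds z] fun w => f w * U w := by
      intro z hz
      filter_upwards [hΩopen.mem_nhds hz] with w hw
      exact Set.indicator_of_mem hw _
    have hFloc0 : ∀ z ∉ tsupport u, F =ᶠ[nhds z] 0 := by
      intro z hz
      filter_upwards [hopenc.mem_nhds hz] with w hw
      have hUw : U w = 0 := by
        have : u w = 0 := image_eq_zero_of_notMem_tsupport hw
        simp [hUdef, this]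
      simp [hFdef, hUw]
    have hFC : ContDiff ℝ 1 F := by
      rw [contDiff_iff_contDiffAt]
      intro z
      rcases hcover z with hz | hz
      · have hfz : ContDiffAt ℝ 1 f z :=
          (((hf.contDiffOn hΩopen).contDiffAt (hΩopen.mem_nhds hz)).restrict_scalars ℝ).of_le le_top
        exact (hfz.mul hU.contDiffAt).congr_of_eventuallyEq (hFloc1 z hz)
      · exact contDiffAt_const.congr_of_eventuallyEq (hFloc0 z hz)
    have hFs : HasCompactSupport F := by
      apply hcs.mono
      intro z hz
      simp only [Function.mem_support, hFdef] at hz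
      intro hzu
      apply hz
      have hUz : U z = 0 := by simp [hUdef, hzu]
      by_cases h : z ∈ Ω <;> simp [h, hUz]
    have hpt : ∀ z : ℂ, fderiv ℝ F z 1 + I * fderiv ℝ F z I = f z * D z := by
      intro z
      rcases hcover z with hz | hz
      · have hfz : DifferentiableAt ℂ f z := hf.differentiableAt (hΩopen.mem_nhds hz)
        set Lf := (fderiv ℂ f z).restrictScalars ℝ with hLf
        have hdf : HasFDerivAt f Lf z := hfz.hasFDerivAt.restrictScalars ℝ
        have hdmul := (hdf.mul' (hU.differentiable one_ne_zero z).hasFDerivAt)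
        have hdF : fderiv ℝ F z = f z • fderiv ℝ U z + Lf.smulRight (U z) :=
          (hdmul.congr_of_eventuallyEq (hFloc1 z hz)).fderiv
        have hLfv : ∀ v : ℂ, Lf v = v * (fderiv ℂ f z) 1 := by
          intro v
          have : (fderiv ℂ f z) v = (fderiv ℂ f z) (v • 1) := by rw [smul_eq_mul, mul_one]
          rw [hLf]
          simp only [ContinuousLinearMap.coe_restrictScalars']
          rw [this, (fderiv ℂ f z).map_smul, smul_eq_mul]
        rw [hdF]
        simp only [ContinuousLinearMap.add_apply, ContinuousLinearMap.smul_apply,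
          ContinuousLinearMap.smulRight_apply, smul_eq_mul]
        rw [hLfv 1, hLfv I, hDdef]
        simp only [one_mul]
        linear_combination ((fderiv ℂ f z) 1 * U z : ℂ) * Complex.I_sq
      · have hFz : fderiv ℝ F z = 0 := by
          rw [(hFloc0 z hz).fderiv_eq]
          exact fderiv_const_apply 0
        rw [hFz, hDts z hz]
        simp
    have h0 := integral_dbar_combo_eq_zero hFC hFs
    rw [show (fun z : ℂ => fderiv ℝ F z 1 + I * fderiv ℝ F z I)
        = fun z : ℂ => f z * D z from funext hpt] at h0
    exact h0
  -- continuity / integrability of f * D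
  have hfDcont : Continuous (fun z : ℂ => f z * D z) := by
    rw [continuous_iff_continuousAt]
    intro z
    rcases hcover z with hz | hz
    · exact (hf.continuousOn.continuousAt (hΩopen.mem_nhds hz)).mul hDcont.continuousAt
    · apply ContinuousAt.congr (continuousAt_const (y := (0 : ℂ)))
      filter_upwards [hopenc.mem_nhds hz] with w hw
      rw [hDts w hw, mul_zero]
  have hintc : Integrable (fun z : ℂ => (starRingEnd ℂ) z * D z) :=
    (Complex.continuous_conj.mul hDcont).integrable_of_hasCompactSupport hDs.mul_left
  have hintf : Integrable (fun z : ℂ => f z * D z) :=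
    hfDcont.integrable_of_hasCompactSupport hDs.mul_left
  have hDoffΩ : ∀ z ∉ Ω, D z = 0 := fun z hz => hDts z (fun h => hz (hsupp h))
  have hUoffΩ : ∀ z ∉ Ω, U z = 0 := by
    intro z hz
    have : u z = 0 := image_eq_zero_of_notMem_tsupport (fun h => hz (hsupp h))
    simp [hUdef, this]
  have hres1 : (∫ z in Ω, (starRingEnd ℂ) z * D z) = ∫ z : ℂ, (starRingEnd ℂ) z * D z :=
    setIntegral_eq_integral_of_forall_compl_eq_zero fun z hz => by rw [hDoffΩ z hz, mul_zero]
  have hres2 : (∫ z in Ω, f z * D z) = ∫ z : ℂ, f z * D z :=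
    setIntegral_eq_integral_of_forall_compl_eq_zero fun z hz => by rw [hDoffΩ z hz, mul_zero]
  have hresU : (∫ z in Ω, U z) = ∫ z : ℂ, U z :=
    setIntegral_eq_integral_of_forall_compl_eq_zero fun z hz => hUoffΩ z hz
  have hUint : (∫ z : ℂ, U z) = (((∫ z in Ω, u z) : ℝ) : ℂ) := by
    rw [← hresU, hUdef]
    exact integral_ofReal
  have hsub : (∫ z in Ω, ((starRingEnd ℂ) z - f z) * D z)
      = -2 * (((∫ z in Ω, u z) : ℝ) : ℂ) := by
    have : (fun z => ((starRingEnd ℂ) z - f z) * D z)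
        = fun z => (starRingEnd ℂ) z * D z - f z * D z := funext fun z => by ring
    rw [this, MeasureTheory.integral_sub hintc.integrableOn hintf.integrableOn,
      hres1, hres2, claimB, claimA, sub_zero, hUint]
  -- Hölder (Cauchy–Schwarz)
  haveI : IsFiniteMeasure (volume.restrict Ω) :=
    ⟨by rw [Measure.restrict_apply_univ]; exact hΩbdd.measure_lt_top⟩
  obtain ⟨R, hR⟩ := hΩbdd.subset_closedBall (0 : ℂ)
  have memconj : MemLp (fun z : ℂ => (starRingEnd ℂ) z) 2 (volume.restrict Ω) := by
    apply MemLp.of_bound Complex.continuous_conj.aestronglyMeasurable R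
    filter_upwards [ae_restrict_mem hΩopen.measurableSet] with z hz
    have := hR hz
    rw [Metric.mem_closedBall, Complex.dist_eq, sub_zero] at this
    simpa using this
  have memG : MemLp (fun z : ℂ => (starRingEnd ℂ) z - f z) 2 (volume.restrict Ω) :=
    memconj.sub hfL2
  have memD : MemLp D 2 (volume.restrict Ω) :=
    (hDcont.memLp_of_hasCompactSupport hDs).restrict Ω
  have hpq : Real.HolderConjugate 2 2 := Real.holderConjugate_iff.mpr ⟨one_lt_two, by norm_num⟩
  have hofReal : ENNReal.ofReal (2 : ℝ) = 2 := by
    rw [ENNReal.ofReal_ofNat]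
  have hCS := MeasureTheory.integral_mul_norm_le_Lp_mul_Lq (μ := volume.restrict Ω) hpq
    (by rw [hofReal]; exact memG) (by rw [hofReal]; exact memD)
  -- convert rpow to pow
  have hA0 : 0 ≤ ∫ z in Ω, ‖(starRingEnd ℂ) z - f z‖ ^ 2 :=
    integral_nonneg fun z => by positivity
  have hB0 : 0 ≤ ∫ z in Ω, ‖D z‖ ^ 2 := integral_nonneg fun z => by positivity
  have hrw1 : (∫ z in Ω, ‖(starRingEnd ℂ) z - f z‖ ^ (2 : ℝ))
      = ∫ z in Ω, ‖(starRingEnd ℂ) z - f z‖ ^ 2 := by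
    congr 1; funext z; exact Real.rpow_two _
  have hrw2 : (∫ z in Ω, ‖D z‖ ^ (2 : ℝ)) = ∫ z in Ω, ‖D z‖ ^ 2 := by
    congr 1; funext z; exact Real.rpow_two _
  rw [hrw1, hrw2, ← Real.sqrt_eq_rpow, ← Real.sqrt_eq_rpow] at hCS
  -- the L² bound of the pairing
  have hnormint : ‖∫ z in Ω, ((starRingEnd ℂ) z - f z) * D z‖
      ≤ ∫ z in Ω, ‖(starRingEnd ℂ) z - f z‖ * ‖D z‖ := by
    refine le_trans (norm_integral_le_integral_norm _) (le_of_eq ?_)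
    congr 1; funext z; exact norm_mul _ _
  have hlhs : ‖∫ z in Ω, ((starRingEnd ℂ) z - f z) * D z‖ = 2 * |∫ z in Ω, u z| := by
    rw [hsub]
    rw [norm_mul]
    simp [Complex.norm_real]
  have hmain : 2 * |∫ z in Ω, u z| ≤
      Real.sqrt (∫ z in Ω, ‖(starRingEnd ℂ) z - f z‖ ^ 2) *
        Real.sqrt (∫ z in Ω, ‖D z‖ ^ 2) := by
    rw [← hlhs]
    exact le_trans hnormint hCS
  -- B ≤ C
  have hC0 : 0 ≤ ∫ z in Ω, ‖fderiv ℝ u z‖ ^ 2 := integral_nonneg fun z => by positivity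
  have hBC : (∫ z in Ω, ‖D z‖ ^ 2) ≤ ∫ z in Ω, ‖fderiv ℝ u z‖ ^ 2 := by
    apply MeasureTheory.integral_mono
    · have h1 : HasCompactSupport (fun z => ‖D z‖ ^ 2) :=
        hDs.comp_left (g := fun c : ℂ => ‖c‖ ^ 2) (by simp)
      exact ((hDcont.norm.pow 2).integrable_of_hasCompactSupport h1).integrableOn
    · have h2 : HasCompactSupport (fun z => ‖fderiv ℝ u z‖ ^ 2) :=
        (hcs.fderiv ℝ).comp_left (g := fun L : ℂ →L[ℝ] ℝ => ‖L‖ ^ 2) (by simp)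
      exact ((((hu1.continuous_fderiv one_ne_zero)).norm.pow 2).integrable_of_hasCompactSupport
        h2).integrableOn
    · intro z
      exact pow_le_pow_left₀ (norm_nonneg _) (hDle z) 2
  -- final arithmetic
  have hfin : (2 * |∫ z in Ω, u z|) ^ 2 ≤
      (∫ z in Ω, ‖(starRingEnd ℂ) z - f z‖ ^ 2) * (∫ z in Ω, ‖D z‖ ^ 2) := by
    have h2 : 0 ≤ 2 * |∫ z in Ω, u z| := by positivity
    calc (2 * |∫ z in Ω, u z|) ^ 2
        ≤ (Real.sqrt (∫ z in Ω, ‖(starRingEnd ℂ) z - f z‖ ^ 2) *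
            Real.sqrt (∫ z in Ω, ‖D z‖ ^ 2)) ^ 2 := by
          apply pow_le_pow_left₀ h2 hmain
      _ = (∫ z in Ω, ‖(starRingEnd ℂ) z - f z‖ ^ 2) * (∫ z in Ω, ‖D z‖ ^ 2) := by
          rw [mul_pow, Real.sq_sqrt hA0, Real.sq_sqrt hB0]
  have : 4 * (∫ z in Ω, u z) ^ 2 = (2 * |∫ z in Ω, u z|) ^ 2 := by
    rw [mul_pow, _root_.sq_abs]; ring
  rw [this]
  exact le_trans hfin (mul_le_mul_of_nonneg_left hBC hA0)

/-- The Bergman analytic content dominates the square root of the torsional rigidity: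
`λ_{A²}(Ω) ≥ √ρ(Ω)`, where `ρ(Ω)` is given by its variational characterization
`ρ(Ω) = sup_u 4 (∫_Ω u)² / ‖∇u‖₂²` over nonzero `u ∈ W₀^{1,2}(Ω)`. -/
theorem bergman_content_ge_sqrt_torsional_rigidity
    (Ω : Set ℂ) (hΩopen : IsOpen Ω) (hΩconn : IsConnected Ω)
    (hΩbdd : Bornology.IsBounded Ω) (hΩsc : SimplyConnectedSpace Ω) :
    Real.sqrt (sSup {r : ℝ | ∃ u : ℂ → ℝ, ContDiff ℝ (⊤ : ℕ∞) u ∧ HasCompactSupport u ∧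
        tsupport u ⊆ Ω ∧ u ≠ 0 ∧
        r = 4 * (∫ z in Ω, u z) ^ 2 / (∫ z in Ω, ‖fderiv ℝ u z‖ ^ 2)}) ≤
      sInf {r : ℝ | ∃ f : ℂ → ℂ, DifferentiableOn ℂ f Ω ∧
        MemLp f 2 (volume.restrict Ω) ∧
        r = Real.sqrt (∫ z in Ω, ‖(starRingEnd ℂ) z - f z‖ ^ 2)} := by
  apply le_csInf
  · exact ⟨Real.sqrt (∫ z in Ω, ‖(starRingEnd ℂ) z - (0 : ℂ → ℂ) z‖ ^ 2),
      (0 : ℂ → ℂ), differentiableOn_const 0, MemLp.zero, rfl⟩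
  · rintro r ⟨f, hfdiff, hfL2, rfl⟩
    apply Real.sqrt_le_sqrt
    apply Real.sSup_le _ (integral_nonneg fun z => by positivity)
    rintro x ⟨u, hu, hcs, hsupp, hu0, rfl⟩
    have hkey := key_ineq Ω hΩopen hΩbdd u hu hcs hsupp f hfdiff hfL2
    have hC0 : (0 : ℝ) ≤ ∫ z in Ω, ‖fderiv ℝ u z‖ ^ 2 :=
      integral_nonneg fun z => by positivity
    rcases eq_or_lt_of_le hC0 with h | h
    · rw [← h, div_zero]
      exact integral_nonneg fun z => by positivity
    · rw [div_le_iff₀ h]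
      exact hkey
end

section
/- Let Ω ⊂ ℂ be a bounded simply connected domain with piecewise smooth boundary. Then the torsional rigidity satisfies the St. Venant inequality ρ(Ω) ≤ Area(Ω)²/(2π). -/
open MeasureTheory Complex Real

/-- The operator norm of a real-linear functional on `ℂ` in terms of its values at `1` and `I`. -/
lemma stv_opNorm_sq (L : ℂ →L[ℝ] ℝ) : ‖L‖ ^ 2 = L 1 ^ 2 + L Complex.I ^ 2 := by
  set a := L 1 with ha
  set b := L Complex.I with hb
  have hL : ∀ z : ℂ, L z = a * z.re + b * z.im := by
    intro z
    have hz : z = z.re • (1 : ℂ) + z.im • Complex.I := by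
      simp [Complex.real_smul, Complex.re_add_im]
    calc L z = L (z.re • (1 : ℂ) + z.im • Complex.I) := by rw [← hz]
    _ = a * z.re + b * z.im := by
        rw [map_add, L.map_smul, L.map_smul, ← ha, ← hb]; simp [mul_comm]
  have hnorm : ‖L‖ = Real.sqrt (a ^ 2 + b ^ 2) := by
    refine le_antisymm ?_ ?_
    · refine L.opNorm_le_bound (Real.sqrt_nonneg _) fun z => ?_
      rw [hL z]
      have hzn : ‖z‖ = Real.sqrt (z.re ^ 2 + z.im ^ 2) := by
        rw [Complex.norm_def, Complex.normSq_apply]; ring_nf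
      rw [hzn, Real.norm_eq_abs, ← Real.sqrt_mul (by positivity)]
      refine Real.abs_le_sqrt ?_
      nlinarith [sq_nonneg (a * z.im - b * z.re), sq_nonneg (a * z.re + b * z.im)]
    · rcases eq_or_lt_of_le (by positivity : (0:ℝ) ≤ a ^ 2 + b ^ 2) with h0 | h0
      · rw [← h0, Real.sqrt_zero]; exact norm_nonneg _
      · set z₀ : ℂ := Complex.mk a b with hz₀
        have hz₀re : z₀.re = a := rfl
        have hz₀im : z₀.im = b := rfl
        have h1 : L z₀ = a ^ 2 + b ^ 2 := by rw [hL z₀, hz₀re, hz₀im]; ring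
        have h2 : ‖z₀‖ = Real.sqrt (a ^ 2 + b ^ 2) := by
          rw [Complex.norm_def, Complex.normSq_apply, hz₀re, hz₀im]
          ring_nf
        have h3 := L.le_opNorm z₀
        rw [h2, Real.norm_eq_abs, h1, abs_of_pos h0] at h3
        have hs : 0 < Real.sqrt (a ^ 2 + b ^ 2) := Real.sqrt_pos.2 h0
        calc Real.sqrt (a ^ 2 + b ^ 2)
            = (a ^ 2 + b ^ 2) / Real.sqrt (a ^ 2 + b ^ 2) := (Real.div_sqrt).symm
        _ ≤ ‖L‖ := by
              rw [div_le_iff₀ hs]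
              linarith [h3]
  rw [hnorm, Real.sq_sqrt (by positivity)]

theorem test : True := trivial

lemma stv_key (Ω : Set ℂ) (hΩopen : IsOpen Ω) (hΩbdd : Bornology.IsBounded Ω)
    (f : ℂ → ℂ) (hf : DifferentiableOn ℂ f Ω) (hfL2 : MemLp f 2 (volume.restrict Ω))
    (u : ℂ → ℝ) (hu : ContDiff ℝ (⊤ : ℕ∞) u) (hcs : HasCompactSupport u) (hts : tsupport u ⊆ Ω) :
    4 * (∫ z in Ω, u z) ^ 2 ≤
      (∫ z in Ω, ‖fderiv ℝ u z‖ ^ 2) * (∫ z in Ω, ‖(starRingEnd ℂ) z - f z‖ ^ 2) := by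
  haveI : IsFiniteMeasure (volume.restrict Ω) :=
    ⟨by rw [Measure.restrict_apply_univ]; exact hΩbdd.measure_lt_top⟩
  have hudiff : Differentiable ℝ u := hu.differentiable (by simp)
  set v : ℂ → ℂ := fun z => (starRingEnd ℂ) z - f z with hv_def
  set w : ℂ → ℂ := Ω.indicator (fun z => (u z : ℂ) * v z) with hw_def
  set d : ℂ → ℂ := fun z => (fderiv ℝ u z 1 : ℂ) + Complex.I * (fderiv ℝ u z Complex.I : ℂ)
    with hd_def
  -- basic differentiability facts
  have hvdiff : ∀ z ∈ Ω, DifferentiableAt ℝ v z := by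
    intro z hz
    exact (Complex.conjCLE.differentiableAt).sub
      ((hf.differentiableAt (hΩopen.mem_nhds hz)).restrictScalars ℝ)
  have hewΩ : ∀ z ∈ Ω, w =ᶠ[nhds z] fun y => (u y : ℂ) * v y := by
    intro z hz
    filter_upwards [hΩopen.mem_nhds hz] with y hy
    exact Set.indicator_of_mem hy _
  have hew0 : ∀ z ∉ tsupport u, w =ᶠ[nhds z] 0 := by
    intro z hz
    filter_upwards [(isClosed_tsupport u).isOpen_compl.mem_nhds hz] with y hy
    have h0 : u y = 0 := image_eq_zero_of_notMem_tsupport hy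
    simp [hw_def, Set.indicator_apply, h0]
  have hwdiff : Differentiable ℝ w := by
    intro z
    by_cases hz : z ∈ Ω
    · exact (((Complex.ofRealCLM.differentiable.comp hudiff) z).mul
        (hvdiff z hz)).congr_of_eventuallyEq (hewΩ z hz)
    · have hz' : z ∉ tsupport u := fun h => hz (hts h)
      exact (differentiable_const (0:ℂ) z).congr_of_eventuallyEq (hew0 z hz')
  have hfd0 : ∀ z ∉ tsupport u, fderiv ℝ w z = 0 := by
    intro z hz
    rw [(hew0 z hz).fderiv_eq]
    exact fderiv_const_apply 0
  have hfdΩ : ∀ z ∈ Ω, ∀ e : ℂ, fderiv ℝ w z e =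
      (fderiv ℝ u z e : ℂ) * v z + (u z : ℂ) * ((starRingEnd ℂ) e - e * deriv f z) := by
    intro z hz e
    have hu' : HasFDerivAt (fun y => (u y : ℂ)) (Complex.ofRealCLM.comp (fderiv ℝ u z)) z :=
      Complex.ofRealCLM.hasFDerivAt.comp z (hudiff z).hasFDerivAt
    have hfz : DifferentiableAt ℂ f z := hf.differentiableAt (hΩopen.mem_nhds hz)
    have hf' : HasFDerivAt f ((fderiv ℂ f z).restrictScalars ℝ) z :=
      hfz.hasFDerivAt.restrictScalars ℝ
    have hconj : HasFDerivAt (starRingEnd ℂ)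
        (Complex.conjCLE.toContinuousLinearMap) z := Complex.conjCLE.hasFDerivAt
    have hv' : HasFDerivAt v
        (Complex.conjCLE.toContinuousLinearMap - (fderiv ℂ f z).restrictScalars ℝ) z :=
      hconj.sub hf'
    have hw' := hu'.mul' hv'
    have hfe : fderiv ℂ f z e = e * deriv f z := by
      have h1 : e • (1:ℂ) = e := by simp
      rw [← fderiv_apply_one_eq_deriv, ← h1, (fderiv ℂ f z).map_smul, smul_eq_mul, smul_eq_mul, mul_one]
    rw [(hewΩ z hz).fderiv_eq, show (fun y => (u y : ℂ) * v y) = (fun y => (u y : ℂ)) * v from rfl,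
      hw'.fderiv]
    simp only [ContinuousLinearMap.add_apply, ContinuousLinearMap.coe_smul',
      ContinuousLinearMap.smulRight_apply, ContinuousLinearMap.sub_apply,
      ContinuousLinearMap.coe_restrictScalars', ContinuousLinearMap.coe_comp',
      Function.comp_apply, Complex.ofRealCLM_apply, Pi.smul_apply,
      ContinuousLinearEquiv.coe_coe, Complex.conjCLE_apply, hfe, smul_eq_mul, op_smul_eq_mul]
    push_cast
    ring
  -- continuity of the applied derivative of w
  have hcontu : ∀ e : ℂ, Continuous fun z => fderiv ℝ u z e := by
    intro e
    have := (hu.continuous_fderiv_apply (by simp)).comp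
      (continuous_id.prodMk (continuous_const (y := e)))
    exact this
  have hfccont : ContinuousOn (deriv f) Ω :=
    ((hf.analyticOnNhd hΩopen).deriv).continuousOn
  have hPcont : ∀ e : ℂ, ContinuousOn (fun z =>
      (fderiv ℝ u z e : ℂ) * v z + (u z : ℂ) * ((starRingEnd ℂ) e - e * deriv f z)) Ω := by
    intro e
    apply ContinuousOn.add
    · exact ((Complex.continuous_ofReal.comp (hcontu e)).continuousOn).mul
        ((Complex.continuous_conj.continuousOn).sub hf.continuousOn)
    · exact ((Complex.continuous_ofReal.comp hu.continuous).continuousOn).mul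
        (continuousOn_const.sub (continuousOn_const.mul hfccont))
  have hFcont : ∀ e : ℂ, Continuous fun z => fderiv ℝ w z e := by
    intro e
    rw [continuous_iff_continuousAt]
    intro z
    by_cases hz : z ∈ Ω
    · refine ((hPcont e).continuousAt (hΩopen.mem_nhds hz)).congr ?_
      filter_upwards [hΩopen.mem_nhds hz] with y hy
      exact (hfdΩ y hy e).symm
    · have hz' : z ∉ tsupport u := fun h => hz (hts h)
      refine (continuousAt_const (y := (0:ℂ))).congr ?_
      filter_upwards [(isClosed_tsupport u).isOpen_compl.mem_nhds hz'] with y hy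
      rw [hfd0 y hy]
      rfl
  have hFcs : ∀ e : ℂ, HasCompactSupport fun z => fderiv ℝ w z e := by
    intro e
    apply HasCompactSupport.intro hcs
    intro z hz
    rw [hfd0 z hz]
    rfl
  have hwcont : Continuous w := by
    rw [continuous_iff_continuousAt]
    intro z
    by_cases hz : z ∈ Ω
    · have hc : ContinuousAt (fun y => (u y : ℂ) * v y) z := by
        refine (Complex.continuous_ofReal.comp hu.continuous).continuousAt.mul ?_
        exact ((hvdiff z hz).continuousAt)
      exact hc.congr (Filter.EventuallyEq.symm (hewΩ z hz))
    · have hz' : z ∉ tsupport u := fun h => hz (hts h)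
      exact (continuousAt_const (y := (0:ℂ))).congr (Filter.EventuallyEq.symm (hew0 z hz'))
  have hwcs : HasCompactSupport w := by
    apply HasCompactSupport.intro hcs
    intro z hz
    have h0 : u z = 0 := image_eq_zero_of_notMem_tsupport hz
    simp [hw_def, Set.indicator_apply, h0]
  -- integration by parts : ∫ fderiv w · e = 0
  have hibp : ∀ e : ℂ, (∫ z, fderiv ℝ w z e) = 0 := by
    intro e
    have h1 : Integrable (fun x => fderiv ℝ w x e * 1) volume := by
      simpa using ((hFcont e).integrable_of_hasCompactSupport (hFcs e))
    have h2 : Integrable (fun x : ℂ => w x * fderiv ℝ (fun _ => (1:ℂ)) x e) volume := by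
      simp only [fderiv_fun_const, Pi.zero_apply, ContinuousLinearMap.zero_apply, mul_zero]
      exact integrable_zero _ _ _
    have h3 : Integrable (fun x => w x * 1) volume := by
      simpa using (hwcont.integrable_of_hasCompactSupport hwcs)
    have h := integral_mul_fderiv_eq_neg_fderiv_mul_of_integrable h1 h2 h3
      (fun x _ => hwdiff x) (fun x _ => differentiable_const (1:ℂ) x)
    simp only [fderiv_fun_const, Pi.zero_apply, ContinuousLinearMap.zero_apply, mul_zero,
      mul_one, integral_zero] at h
    exact neg_eq_zero.mp h.symm
  -- the pointwise identity on Ω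
  have hG : ∀ z ∈ Ω, fderiv ℝ w z 1 + Complex.I * fderiv ℝ w z Complex.I
      = d z * v z + 2 * (u z : ℂ) := by
    intro z hz
    rw [hfdΩ z hz 1, hfdΩ z hz Complex.I]
    simp only [hd_def, map_one, Complex.conj_I]
    linear_combination (-(↑(u z)) * (1 + deriv f z)) * Complex.I_sq
  have hG0 : ∀ z ∉ Ω, fderiv ℝ w z 1 + Complex.I * fderiv ℝ w z Complex.I = 0 := by
    intro z hz
    have hz' : z ∉ tsupport u := fun h => hz (hts h)
    rw [hfd0 z hz']
    simp
  have hGset : (∫ z in Ω, (fderiv ℝ w z 1 + Complex.I * fderiv ℝ w z Complex.I)) = 0 := by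
    rw [setIntegral_eq_integral_of_forall_compl_eq_zero hG0,
      integral_add ((hFcont 1).integrable_of_hasCompactSupport (hFcs 1))
        (((hFcont Complex.I).integrable_of_hasCompactSupport (hFcs Complex.I)).const_mul _),
      integral_const_mul, hibp 1, hibp Complex.I]
    simp
  -- integrability over Ω
  have hvL2 : MemLp v 2 (volume.restrict Ω) := by
    have hconjL2 : MemLp (fun z : ℂ => (starRingEnd ℂ) z) 2 (volume.restrict Ω) := by
      obtain ⟨C, hC⟩ := isBounded_iff_forall_norm_le.mp hΩbdd
      refine MemLp.of_bound (Complex.continuous_conj.aestronglyMeasurable) C ?_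
      filter_upwards [ae_restrict_mem hΩopen.measurableSet] with z hz
      simpa using hC z hz
    exact hconjL2.sub hfL2
  have hvint : Integrable v (volume.restrict Ω) := hvL2.integrable one_le_two
  have hdcont : Continuous d :=
    (Complex.continuous_ofReal.comp (hcontu 1)).add
      (continuous_const.mul (Complex.continuous_ofReal.comp (hcontu Complex.I)))
  have hdcs : HasCompactSupport d := by
    apply HasCompactSupport.intro hcs
    intro z hz
    have h0 : fderiv ℝ u z = 0 := by
      by_contra h
      exact hz (support_fderiv_subset ℝ (f := u) h)
    simp [hd_def, h0]
  have hdvint : Integrable (fun z => d z * v z) (volume.restrict Ω) := by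
    obtain ⟨C, hC⟩ := hdcs.exists_bound_of_continuous hdcont
    exact hvint.bdd_mul hdcont.aestronglyMeasurable (Filter.Eventually.of_forall fun x => hC x)
  have huint : Integrable (fun z => (u z : ℂ)) (volume.restrict Ω) :=
    ((Complex.continuous_ofReal.comp hu.continuous).integrable_of_hasCompactSupport
      (hcs.comp_left Complex.ofReal_zero)).restrict
  have hsplit : (∫ z in Ω, d z * v z) = - (2 * ((∫ z in Ω, u z : ℝ) : ℂ)) := by
    rw [setIntegral_congr_fun hΩopen.measurableSet (fun z hz => hG z hz)] at hGset
    rw [integral_add hdvint (huint.const_mul 2), integral_const_mul] at hGset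
    have hre : (∫ z in Ω, (u z : ℂ)) = ((∫ z in Ω, u z : ℝ) : ℂ) := integral_ofReal
    rw [hre] at hGset
    linear_combination hGset
  -- Cauchy-Schwarz and conclusion
  have hdL2 : MemLp d 2 (volume.restrict Ω) :=
    (hdcont.memLp_of_hasCompactSupport (μ := volume) hdcs).restrict Ω
  have h22 : Real.HolderConjugate 2 2 := Real.holderConjugate_iff.mpr ⟨one_lt_two, by norm_num⟩
  have hofReal2 : ENNReal.ofReal (2:ℝ) = 2 := by norm_num [ENNReal.ofReal_ofNat]
  have hCS := integral_mul_norm_le_Lp_mul_Lq (μ := volume.restrict Ω) h22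
    (by rw [hofReal2]; exact hdL2) (by rw [hofReal2]; exact hvL2)
  have hXnn : (0:ℝ) ≤ ∫ z in Ω, ‖d z‖ ^ (2:ℝ) :=
    integral_nonneg fun z => Real.rpow_nonneg (norm_nonneg _) _
  have hYnn : (0:ℝ) ≤ ∫ z in Ω, ‖v z‖ ^ (2:ℝ) :=
    integral_nonneg fun z => Real.rpow_nonneg (norm_nonneg _) _
  have hd2 : ∀ z : ℂ, ‖d z‖ ^ 2 = ‖fderiv ℝ u z‖ ^ 2 := by
    intro z
    rw [stv_opNorm_sq, hd_def, Complex.sq_norm, Complex.normSq_apply]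
    simp
    ring
  have hXeq : (∫ z in Ω, ‖d z‖ ^ (2:ℝ)) = ∫ z in Ω, ‖fderiv ℝ u z‖ ^ 2 := by
    refine integral_congr_ae (Filter.Eventually.of_forall fun z => ?_)
    dsimp only
    rw [show ((2:ℝ)) = ((2:ℕ):ℝ) by norm_num, Real.rpow_natCast, hd2 z]
  have hYeq : (∫ z in Ω, ‖v z‖ ^ (2:ℝ)) = ∫ z in Ω, ‖(starRingEnd ℂ) z - f z‖ ^ 2 := by
    refine integral_congr_ae (Filter.Eventually.of_forall fun z => ?_)
    dsimp only
    rw [show ((2:ℝ)) = ((2:ℕ):ℝ) by norm_num, Real.rpow_natCast]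
  have hrpow : ∀ X : ℝ, 0 ≤ X → (X ^ ((1:ℝ)/2)) ^ (2:ℕ) = X := by
    intro X hX
    rw [← Real.rpow_natCast (X ^ ((1:ℝ)/2)) 2, ← Real.rpow_mul hX]
    norm_num
  calc 4 * (∫ z in Ω, u z) ^ 2 = (2 * |∫ z in Ω, u z|) ^ 2 := by
        rw [mul_pow, _root_.sq_abs]; ring
  _ = ‖∫ z in Ω, d z * v z‖ ^ 2 := by
        rw [hsplit, norm_neg, norm_mul]
        simp [Complex.norm_real]
  _ ≤ (∫ z in Ω, ‖d z * v z‖) ^ 2 :=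
        pow_le_pow_left₀ (norm_nonneg _) (norm_integral_le_integral_norm _) 2
  _ = (∫ z in Ω, ‖d z‖ * ‖v z‖) ^ 2 := by
        congr 1
        exact integral_congr_ae (Filter.Eventually.of_forall fun z => norm_mul _ _)
  _ ≤ ((∫ z in Ω, ‖d z‖ ^ (2:ℝ)) ^ ((1:ℝ)/2) * (∫ z in Ω, ‖v z‖ ^ (2:ℝ)) ^ ((1:ℝ)/2)) ^ 2 := by
        refine pow_le_pow_left₀ (integral_nonneg fun z => ?_) hCS 2
        positivity
  _ = (∫ z in Ω, ‖d z‖ ^ (2:ℝ)) * (∫ z in Ω, ‖v z‖ ^ (2:ℝ)) := by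
        rw [mul_pow, hrpow _ hXnn, hrpow _ hYnn]
  _ = (∫ z in Ω, ‖fderiv ℝ u z‖ ^ 2) * (∫ z in Ω, ‖(starRingEnd ℂ) z - f z‖ ^ 2) := by
        rw [hXeq, hYeq]
/-- St. Venant's inequality: the torsional rigidity of a bounded simply connected plane
domain satisfies `ρ(Ω) ≤ Area(Ω)²/(2π)`. (As in the paper, the Olsen–Reguera commutator
bound `‖[T_z*,T_z]‖ ≤ Area(Ω)/(2π)` is taken as given.) -/
theorem st_venant_inequality
    (Ω : Set ℂ) (hΩopen : IsOpen Ω) (hΩconn : IsConnected Ω)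
    (hΩbdd : Bornology.IsBounded Ω) (hΩsc : SimplyConnectedSpace Ω)
    (hcomm : ∀ g : ℂ → ℂ, DifferentiableOn ℂ g Ω → MemLp g 2 (volume.restrict Ω) →
      (∫ z in Ω, ‖g z‖ ^ 2) = 1 →
      sInf {r : ℝ | ∃ f : ℂ → ℂ, DifferentiableOn ℂ f Ω ∧
          MemLp f 2 (volume.restrict Ω) ∧
          r = ∫ z in Ω, ‖(starRingEnd ℂ) z * g z - f z‖ ^ 2} ≤
        (volume Ω).toReal / (2 * π)) :
    sSup {r : ℝ | ∃ u : ℂ → ℝ, ContDiff ℝ (⊤ : ℕ∞) u ∧ HasCompactSupport u ∧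
        tsupport u ⊆ Ω ∧ u ≠ 0 ∧
        r = 4 * (∫ z in Ω, u z) ^ 2 / (∫ z in Ω, ‖fderiv ℝ u z‖ ^ 2)} ≤
      (volume Ω).toReal ^ 2 / (2 * π) := by
  have hΩne : Ω.Nonempty := hΩconn.nonempty
  have hApos : 0 < (volume Ω).toReal := by
    have h1 : 0 < volume Ω := hΩopen.measure_pos volume hΩne
    exact ENNReal.toReal_pos h1.ne' hΩbdd.measure_lt_top.ne
  set A := (volume Ω).toReal with hA
  have hπ : 0 < 2 * π := by positivity
  refine Real.sSup_le ?_ (by positivity)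
  rintro r ⟨u, hu, hcs, hts, hune, rfl⟩
  set D := ∫ z in Ω, ‖fderiv ℝ u z‖ ^ 2 with hD
  have hDnn : (0:ℝ) ≤ D := integral_nonneg fun z => by positivity
  rcases eq_or_lt_of_le hDnn with hD0 | hDpos
  · rw [← hD0, div_zero]
    positivity
  haveI : IsFiniteMeasure (volume.restrict Ω) :=
    ⟨by rw [Measure.restrict_apply_univ]; exact hΩbdd.measure_lt_top⟩
  set c : ℂ := (((Real.sqrt A)⁻¹ : ℝ) : ℂ) with hc
  have hsA : 0 < Real.sqrt A := Real.sqrt_pos.2 hApos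
  have hnormc : ‖c‖ ^ 2 = A⁻¹ := by
    rw [hc, Complex.norm_real, Real.norm_eq_abs, abs_of_pos (by positivity), inv_pow,
      Real.sq_sqrt hApos.le]
  have hg3 : (∫ z in Ω, ‖(fun _ : ℂ => c) z‖ ^ 2) = 1 := by
    rw [setIntegral_const, hnormc, smul_eq_mul, measureReal_def, ← hA, mul_inv_cancel₀ hApos.ne']
  have hle := hcomm (fun _ => c) (differentiableOn_const c) (memLp_const c) hg3
  have hlow : 4 * (∫ z in Ω, u z) ^ 2 / (D * A) ≤
      sInf {r : ℝ | ∃ f : ℂ → ℂ, DifferentiableOn ℂ f Ω ∧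
          MemLp f 2 (volume.restrict Ω) ∧
          r = ∫ z in Ω, ‖(starRingEnd ℂ) z * (fun _ : ℂ => c) z - f z‖ ^ 2} := by
    refine le_csInf ⟨_, (fun _ => 0), differentiableOn_const 0,
      memLp_const 0, rfl⟩ ?_
    rintro b ⟨f, hf1, hf2, rfl⟩
    set F : ℂ → ℂ := fun z => ((Real.sqrt A : ℝ) : ℂ) * f z with hF
    have hF1 : DifferentiableOn ℂ F Ω := fun z hz => (hf1 z hz).const_mul _
    have hF2 : MemLp F 2 (volume.restrict Ω) := hf2.const_mul _
    have hkey := stv_key Ω hΩopen hΩbdd F hF1 hF2 u hu hcs hts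
    have hpt : ∀ z : ℂ, ‖(starRingEnd ℂ) z * c - f z‖ ^ 2
        = A⁻¹ * ‖(starRingEnd ℂ) z - F z‖ ^ 2 := by
      intro z
      have hmul : (starRingEnd ℂ) z * c - f z = c * ((starRingEnd ℂ) z - F z) := by
        have hcA : c * ((Real.sqrt A : ℝ) : ℂ) = 1 := by
          rw [hc, ← Complex.ofReal_mul, inv_mul_cancel₀ hsA.ne']
          simp
        simp only [hF]
        linear_combination f z * hcA
      rw [hmul, norm_mul, mul_pow, hnormc]
    have hbeq : (∫ z in Ω, ‖(starRingEnd ℂ) z * c - f z‖ ^ 2)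
        = A⁻¹ * ∫ z in Ω, ‖(starRingEnd ℂ) z - F z‖ ^ 2 := by
      rw [← integral_const_mul]
      exact integral_congr_ae (Filter.Eventually.of_forall fun z => hpt z)
    rw [hbeq]
    rw [div_le_iff₀ (by positivity : (0:ℝ) < D * A)]
    calc 4 * (∫ z in Ω, u z) ^ 2
        ≤ D * ∫ z in Ω, ‖(starRingEnd ℂ) z - F z‖ ^ 2 := hkey
    _ = A⁻¹ * (∫ z in Ω, ‖(starRingEnd ℂ) z - F z‖ ^ 2) * (D * A) := by
        field_simp
  have hfinal : 4 * (∫ z in Ω, u z) ^ 2 / (D * A) ≤ A / (2 * π) := hlow.trans hle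
  rw [div_le_iff₀ (by positivity : (0:ℝ) < D * A)] at hfinal
  rw [div_le_iff₀ hDpos]
  calc 4 * (∫ z in Ω, u z) ^ 2 ≤ A / (2 * π) * (D * A) := hfinal
  _ = A ^ 2 / (2 * π) * D := by ring
end

section
/- Let A = {z : r < |z| < R} be an annulus centered at 0. Then the best approximation to conj(z) in A²(A) is c/z with c = (R² − r²)/(2 log(R/r)); i.e., conj(z) − c/z is orthogonal in L²(A, dA) to z^n for every integer n, since A²(A) is spanned by {z^n : n ∈ ℤ}. -/
set_option maxHeartbeats 1000000

open MeasureTheory Complex Real Set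

lemma aux_alg (ρ e cc : ℂ) (n : ℤ) (hρ : ρ ≠ 0) (he : e ≠ 0) :
    ρ * ((ρ * e⁻¹ - cc / (ρ * e)) * (ρ * e⁻¹) ^ n) = ρ ^ (n+1) * (ρ - cc / ρ) * (e ^ (n+1))⁻¹ := by
  have h1 : e ^ n ≠ 0 := zpow_ne_zero _ he
  have h2 : ρ ^ n ≠ 0 := zpow_ne_zero _ hρ
  rw [mul_zpow, inv_zpow, ← zpow_neg, zpow_add₀ hρ, zpow_add₀ he, zpow_one, zpow_neg]
  field_simp

/-- On the annulus `A = {r < |z| < R}`, the best approximation to `conj z` in `A²(A)` is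
`c/z` with `c = (R² - r²)/(2 log(R/r))`: the difference `conj z - c/z` is orthogonal in
`L²(A, dA)` to every Laurent monomial `z^n`, `n ∈ ℤ`. -/
theorem best_approx_annulus (r R : ℝ) (hr : 0 < r) (hrR : r < R) :
    ∀ n : ℤ,
      ∫ z in {z : ℂ | r < ‖z‖ ∧ ‖z‖ < R},
        ((starRingEnd ℂ) z - ((((R ^ 2 - r ^ 2) / (2 * Real.log (R / r))) : ℝ) : ℂ) / z) *
          (starRingEnd ℂ) (z ^ n) = 0 := by
  intro n
  set c : ℝ := (R ^ 2 - r ^ 2) / (2 * Real.log (R / r)) with hc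
  clear_value c
  set f : ℂ → ℂ := fun z => ((starRingEnd ℂ) z - (c : ℂ) / z) * (starRingEnd ℂ) (z ^ n) with hf
  set S : Set ℂ := {z : ℂ | r < ‖z‖ ∧ ‖z‖ < R} with hSdef
  have hS : MeasurableSet S := (isOpen_Ioo.preimage continuous_norm).measurableSet
  set m : ℤ := n + 1 with hm
  clear_value m
  set g : ℝ → ℂ := fun ρ => (ρ : ℂ) ^ m * ((ρ : ℂ) - (c:ℂ) / ρ) with hg
  set h : ℝ → ℂ := fun θ => Complex.exp (-(m : ℂ) * θ * I) with hh
  have key : (∫ z in S, f z) = (∫ ρ in Ioo r R, g ρ) * ∫ θ in Ioo (-π) π, h θ := by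
    rw [← integral_indicator hS, ← Complex.integral_comp_polarCoord_symm]
    rw [← setIntegral_prod_mul, ← Measure.volume_eq_prod]
    rw [show polarCoord.target = Ioi (0:ℝ) ×ˢ Ioo (-π) π from rfl]
    have hsub : (Ioo r R ×ˢ Ioo (-π) π : Set (ℝ × ℝ)) ⊆ Ioi (0:ℝ) ×ˢ Ioo (-π) π := by
      intro p hp
      exact ⟨lt_trans hr hp.1.1, hp.2⟩
    have step : ∀ p ∈ (Ioi (0:ℝ) ×ˢ Ioo (-π) π : Set (ℝ × ℝ)),
        p.1 • S.indicator f (Complex.polarCoord.symm p)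
          = (Ioo r R ×ˢ Ioo (-π) π : Set (ℝ × ℝ)).indicator (fun p => g p.1 * h p.2) p := by
      intro p hp
      have hp1 : (0:ℝ) < p.1 := hp.1
      have habs : ‖Complex.polarCoord.symm p‖ = p.1 := by
        rw [Complex.norm_polarCoord_symm, abs_of_pos hp1]
      have hmem : Complex.polarCoord.symm p ∈ S ↔ p ∈ (Ioo r R ×ˢ Ioo (-π) π : Set (ℝ × ℝ)) := by
        simp only [hSdef, mem_setOf_eq, habs, mem_prod, mem_Ioo]
        exact ⟨fun h2 => ⟨⟨h2.1, h2.2⟩, hp.2⟩, fun h2 => ⟨h2.1.1, h2.1.2⟩⟩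
      by_cases hcase : p ∈ (Ioo r R ×ˢ Ioo (-π) π : Set (ℝ × ℝ))
      · rw [indicator_of_mem hcase, indicator_of_mem (hmem.2 hcase)]
        have hz : Complex.polarCoord.symm p = (p.1 : ℂ) * Complex.exp (p.2 * I) := by
          rw [Complex.polarCoord_symm_apply, Complex.exp_mul_I]
          push_cast
          ring
        have he : Complex.exp ((p.2:ℂ) * I) ≠ 0 := Complex.exp_ne_zero _
        have hρ : (p.1 : ℂ) ≠ 0 := by exact_mod_cast hp1.ne'
        have hconj : (starRingEnd ℂ) ((p.1:ℂ) * Complex.exp (p.2 * I))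
            = (p.1 : ℂ) * (Complex.exp ((p.2:ℂ) * I))⁻¹ := by
          rw [map_mul, Complex.conj_ofReal, ← Complex.exp_conj, ← Complex.exp_neg]
          congr 1
          simp [Complex.conj_I, Complex.conj_ofReal]
        have hexp : h p.2 = (Complex.exp ((p.2:ℂ) * I)) ^ (-m) := by
          have harg : (-(m:ℂ)) * (p.2:ℂ) * I = ((-m : ℤ) : ℂ) * ((p.2:ℂ) * I) := by
            push_cast; ring
          rw [hh]
          show Complex.exp (-(m:ℂ) * (p.2:ℂ) * I) = _
          rw [harg, Complex.exp_int_mul]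
        rw [hz, Complex.real_smul, hf]
        simp only [map_zpow₀, hconj]
        simp only [hg, hexp]
        rw [hm, zpow_neg]
        exact aux_alg _ _ _ n hρ he
      · rw [indicator_of_notMem hcase, indicator_of_notMem (fun hx => hcase (hmem.1 hx)),
          smul_zero]
    rw [setIntegral_congr_fun (measurableSet_Ioi.prod measurableSet_Ioo) step,
      setIntegral_indicator (measurableSet_Ioo.prod measurableSet_Ioo),
      inter_eq_self_of_subset_right hsub]
  rw [key]
  rcases eq_or_ne m 0 with hm0 | hm0
  · -- radial integral is zero
    have hradial : (∫ ρ in Ioo r R, g ρ) = 0 := by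
      have hcongr : ∀ x ∈ Ioo r R, g x = ((x - c / x : ℝ) : ℂ) := by
        intro x hx
        rw [hg]
        simp only [hm0, zpow_zero, one_mul, Complex.ofReal_sub, Complex.ofReal_div]
      rw [setIntegral_congr_fun measurableSet_Ioo hcongr, ← integral_Ioc_eq_integral_Ioo,
        ← intervalIntegral.integral_of_le hrR.le, intervalIntegral.integral_ofReal]
      have hne0 : (0:ℝ) ∉ Set.uIcc r R := by
        rw [Set.mem_uIcc]
        rintro (⟨h1, h2⟩ | ⟨h1, h2⟩) <;> linarith
      have hne : ∀ x ∈ Set.uIcc r R, x ≠ 0 := fun x hx h0 => hne0 (h0 ▸ hx)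
      have h1 : IntervalIntegrable (fun x : ℝ => x) volume r R :=
        intervalIntegral.intervalIntegrable_id
      have h2 : IntervalIntegrable (fun x : ℝ => c / x) volume r R := by
        apply ContinuousOn.intervalIntegrable
        exact continuousOn_const.div continuousOn_id hne
      rw [intervalIntegral.integral_sub h1 h2]
      have e1 : ∫ x in r..R, (x:ℝ) = (R^2 - r^2)/2 := integral_id
      have e2 : ∫ x in r..R, c / x = c * Real.log (R / r) := by
        simp_rw [← mul_one_div c]
        rw [intervalIntegral.integral_const_mul, integral_one_div hne0]
      have hlog : Real.log (R / r) ≠ 0 := by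
        have : 1 < R / r := (one_lt_div hr).2 hrR
        exact (Real.log_pos this).ne'
      rw [e1, e2, Complex.ofReal_eq_zero, hc]
      field_simp
      ring
    rw [hradial, zero_mul]
  · -- angular integral is zero
    have hangular : (∫ θ in Ioo (-π) π, h θ) = 0 := by
      have hcongr : ∀ θ : ℝ, h θ = Complex.exp ((-(m:ℂ) * I) * θ) := by
        intro θ; rw [hh]; ring_nf
      simp_rw [hcongr]
      rw [← integral_Ioc_eq_integral_Ioo,
        ← intervalIntegral.integral_of_le (by linarith [Real.pi_pos] : -π ≤ π)]
      have hcne : (-(m:ℂ) * I) ≠ 0 := by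
        simp [Complex.ext_iff, hm0]
      rw [integral_exp_mul_complex hcne]
      have heq : Complex.exp (-(m:ℂ) * I * π) = Complex.exp (-(m:ℂ) * I * (-π)) := by
        rw [Complex.exp_eq_exp_iff_exists_int]
        exact ⟨-m, by push_cast; ring⟩
      rw [Complex.ofReal_neg, heq, sub_self, zero_div]
    rw [hangular, mul_zero]
end
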